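/- arXiv:1012.5185 — 3 statements merged into one kernel-verified Lean document; each statement's English description precedes it below -/
import Mathlib

section
/- Lower bound on a vector potential over a disk (Lemma 9.3): Let D_R ⊂ ℝ² be an open disk of radius R > 0, let A ∈ C¹ be an ℝ²-valued vector field on a neighbourhood of the closure of D_R, and suppose curl A (x) ≥ b₀ for all x ∈ D_R, where b₀ > 0. Then ∫_{D_R} |A(x)|² dx ≥ (π/8) b₀² R⁴. -/
open MeasureTheory

noncomputable section

/-- Partial derivative in the first coordinate direction. -/
def pd1 {F : Type*} [NormedAddCommGroup F] [NormedSpace ℝ F]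
    (f : ℝ × ℝ → F) (x : ℝ × ℝ) : F := fderiv ℝ f x (1, 0)

/-- Partial derivative in the second coordinate direction. -/
def pd2 {F : Type*} [NormedAddCommGroup F] [NormedSpace ℝ F]
    (f : ℝ × ℝ → F) (x : ℝ × ℝ) : F := fderiv ℝ f x (0, 1)

/-- `curl A = ∂₁A₂ - ∂₂A₁`. -/
def curl2 (A : ℝ × ℝ → ℝ × ℝ) (x : ℝ × ℝ) : ℝ :=
  pd1 (fun y => (A y).2) x - pd2 (fun y => (A y).1) x

/-- The open Euclidean disk of radius `R` centered at `c`. -/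
def ediskO (c : ℝ × ℝ) (R : ℝ) : Set (ℝ × ℝ) :=
  {x | (x.1 - c.1) ^ 2 + (x.2 - c.2) ^ 2 < R ^ 2}

/-!
Let `t x = R² - |x - c|²`, which is positive exactly on the disk `D`. Testing `curl A ≥ b₀`
against the weight `t₊`, which vanishes on `∂D`, and integrating by parts gives
`b₀ π R⁴ / 2 = b₀ ∫_D t ≤ ∫_D A · (∇t)^⊥`. The pointwise inequality
`u · v ≤ (2/b₀)|u|² + (b₀/8)|v|²` together with `∫_D |∇t|² = ∫_D 4 |x - c|² = 2 π R⁴`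
bounds the right-hand side by `(2/b₀) ∫_D |A|² + b₀ π R⁴ / 4`.

Since `t₊` is not differentiable on `∂D`, the weight actually used is `ramp ε ∘ t`, where
`ramp ε s = s₊² / (s₊ + ε)` is `C¹`, satisfies `s - ε ≤ ramp ε s`, and has slope in `[0, 1]`;
this costs `O(ε)` in the bound, and then `ε → 0`.
-/

open Set Real Function

def ramp (ε s : ℝ) : ℝ := max s 0 - ε + ε ^ 2 / (max s 0 + ε)

def rampDeriv (ε s : ℝ) : ℝ := 1 - (ε / (max s 0 + ε)) ^ 2

section Ramp

variable {ε : ℝ}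

lemma ramp_of_nonpos (hε : 0 < ε) {s : ℝ} (hs : s ≤ 0) : ramp ε s = 0 := by
  rw [ramp, max_eq_right hs]
  field_simp
  ring

lemma rampDeriv_of_nonpos (hε : 0 < ε) {s : ℝ} (hs : s ≤ 0) : rampDeriv ε s = 0 := by
  rw [rampDeriv, max_eq_right hs, zero_add, div_self hε.ne', one_pow, sub_self]

lemma ramp_nonneg (hε : 0 < ε) (s : ℝ) : 0 ≤ ramp ε s := by
  have hs := le_max_right s 0
  have : ramp ε s = max s 0 ^ 2 / (max s 0 + ε) := by
    rw [ramp]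
    field_simp
    ring
  rw [this]
  positivity

lemma sub_le_ramp (hε : 0 < ε) (s : ℝ) : s - ε ≤ ramp ε s := by
  have hs := le_max_right s 0
  have : 0 ≤ ε ^ 2 / (max s 0 + ε) := by positivity
  rw [ramp]
  linarith [le_max_left s 0]

lemma sq_rampDeriv_le_one (hε : 0 < ε) (s : ℝ) : rampDeriv ε s ^ 2 ≤ 1 := by
  have hs := le_max_right s 0
  have h0 : 0 ≤ ε / (max s 0 + ε) := by positivity
  have h1 : ε / (max s 0 + ε) ≤ 1 := div_le_one_of_le₀ (by linarith) (by positivity)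
  rw [rampDeriv, sq_le_one_iff_abs_le_one, abs_le]
  constructor <;> nlinarith

lemma continuous_rampDeriv (hε : 0 < ε) : Continuous (rampDeriv ε) :=
  continuous_const.sub <| (continuous_const.div (by fun_prop)
    fun s => (add_pos_of_nonneg_of_pos (le_max_right s 0) hε).ne').pow 2

lemma hasDerivAt_ramp (hε : 0 < ε) (s : ℝ) : HasDerivAt (ramp ε) (rampDeriv ε s) s := by
  have hIic {s : ℝ} (hs : s ≤ 0) : HasDerivWithinAt (ramp ε) (rampDeriv ε s) (Iic 0) s := by
    rw [rampDeriv_of_nonpos hε hs]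
    exact (hasDerivWithinAt_const s _ 0).congr (fun y hy => ramp_of_nonpos hε hy)
      (ramp_of_nonpos hε hs)
  have hIci {s : ℝ} (hs : 0 ≤ s) : HasDerivWithinAt (ramp ε) (rampDeriv ε s) (Ici 0) s := by
    have hsε : s + ε ≠ 0 := by positivity
    have hg : HasDerivAt (fun u => u - ε + ε ^ 2 * (u + ε)⁻¹) (rampDeriv ε s) s := by
      refine (((hasDerivAt_id' s).sub_const ε).add
        ((((hasDerivAt_id' s).add_const ε).inv hsε).const_mul (ε ^ 2))).congr_deriv ?_
      simp only [rampDeriv, max_eq_left hs]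
      field_simp
      ring
    refine hg.hasDerivWithinAt.congr (fun y (hy : 0 ≤ y) => ?_) ?_
    · simp only [ramp, max_eq_left hy, div_eq_mul_inv]
    · simp only [ramp, max_eq_left hs, div_eq_mul_inv]
  rcases lt_trichotomy s 0 with hs | rfl | hs
  · exact (hIic hs.le).hasDerivAt (Iic_mem_nhds hs)
  · simpa [Iic_union_Ici] using (hIic le_rfl).union (hIci le_rfl)
  · exact (hIci hs.le).hasDerivAt (Ici_mem_nhds hs)

lemma contDiff_ramp (hε : 0 < ε) : ContDiff ℝ 1 (ramp ε) := by
  refine contDiff_one_iff_deriv.2 ⟨fun s => (hasDerivAt_ramp hε s).differentiableAt, ?_⟩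
  rw [show deriv (ramp ε) = rampDeriv ε from funext fun s => (hasDerivAt_ramp hε s).deriv]
  exact continuous_rampDeriv hε

end Ramp

section Curl

variable {A : ℝ × ℝ → ℝ × ℝ} {W : Set (ℝ × ℝ)}

lemma ContDiffOn.continuousOn_curl2 (hW : IsOpen W) (hA : ContDiffOn ℝ 1 A W) :
    ContinuousOn (curl2 A) W :=
  (((contDiff_snd.comp_contDiffOn hA).continuousOn_fderiv_of_isOpen hW le_rfl).clm_apply
    continuousOn_const).sub
  (((contDiff_fst.comp_contDiffOn hA).continuousOn_fderiv_of_isOpen hW le_rfl).clm_apply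
    continuousOn_const)

theorem integral_mul_curl2_eq (hW : IsOpen W) (hA : ContDiffOn ℝ 1 A W) {w : ℝ × ℝ → ℝ}
    (hw : ContDiff ℝ 1 w) (hws : HasCompactSupport w) (hwW : tsupport w ⊆ W) :
    ∫ x, w x * curl2 A x = ∫ x, (pd2 w x * (A x).1 - pd1 w x * (A x).2) := by
  have hint {h : ℝ × ℝ → ℝ} (hh : ContinuousOn h W) (hs : support h ⊆ tsupport w) :
      Integrable h :=
    (integrableOn_iff_integrable_of_support_subset hs).1
      ((hh.mono hwW).integrableOn_compact hws)
  have hw' : Continuous (fderiv ℝ w) := hw.continuous_fderiv one_ne_zero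
  have parts {B : ℝ × ℝ → ℝ} (hB : ContDiffOn ℝ 1 B W) (v : ℝ × ℝ) :
      Integrable (fun x => w x * fderiv ℝ B x v) ∧
      Integrable (fun x => fderiv ℝ w x v * B x) ∧
      ∫ x, w x * fderiv ℝ B x v = -∫ x, fderiv ℝ w x v * B x := by
    have hwB' : Integrable (fun x => w x * fderiv ℝ B x v) :=
      hint (hw.continuous.continuousOn.mul
        ((hB.continuousOn_fderiv_of_isOpen hW le_rfl).clm_apply continuousOn_const))
        ((support_mul_subset_left _ _).trans subset_closure)
    have hw'B : Integrable (fun x => fderiv ℝ w x v * B x) :=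
      hint ((hw'.clm_apply continuous_const).continuousOn.mul hB.continuousOn)
        (fun x hx => support_fderiv_subset ℝ fun h => hx (by simp [h]))
    refine ⟨hwB', hw'B, integral_mul_fderiv_eq_neg_fderiv_mul_of_integrable hw'B hwB'
      (hint (hw.continuous.continuousOn.mul hB.continuousOn)
        ((support_mul_subset_left _ _).trans subset_closure))
      (fun x _ => hw.differentiable one_ne_zero x) fun x hx => ?_⟩
    exact (hB.differentiableOn one_ne_zero).differentiableAt (hW.mem_nhds (hwW hx))
  obtain ⟨h21, h21', e21⟩ := parts (B := fun y => (A y).2) (contDiff_snd.comp_contDiffOn hA) (1, 0)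
  obtain ⟨h12, h12', e12⟩ := parts (B := fun y => (A y).1) (contDiff_fst.comp_contDiffOn hA) (0, 1)
  calc ∫ x, w x * curl2 A x
      = (∫ x, w x * fderiv ℝ (fun y => (A y).2) x (1, 0)) -
          ∫ x, w x * fderiv ℝ (fun y => (A y).1) x (0, 1) := by
        rw [← integral_sub h21 h12]
        simp only [curl2, pd1, pd2, mul_sub]
    _ = (∫ x, fderiv ℝ w x (0, 1) * (A x).1) - ∫ x, fderiv ℝ w x (1, 0) * (A x).2 := by
        rw [e21, e12]
        ring
    _ = ∫ x, (pd2 w x * (A x).1 - pd1 w x * (A x).2) := (integral_sub h12' h21').symm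

end Curl

section Disk

variable {c : ℝ × ℝ} {R : ℝ}

lemma measurableSet_ediskO : MeasurableSet (ediskO c R) :=
  measurableSet_lt (by fun_prop) measurable_const

lemma isBounded_ediskO : Bornology.IsBounded (ediskO c R) := by
  refine (Metric.isBounded_closedBall (x := c) (r := |R|)).subset fun x hx => ?_
  have hx : (x.1 - c.1) ^ 2 + (x.2 - c.2) ^ 2 < R ^ 2 := hx
  rw [Metric.mem_closedBall, Prod.dist_eq, max_le_iff, Real.dist_eq, Real.dist_eq]
  exact ⟨sq_le_sq.1 (by nlinarith [sq_nonneg (x.2 - c.2)]),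
    sq_le_sq.1 (by nlinarith [sq_nonneg (x.1 - c.1)])⟩

lemma ContinuousOn.integrableOn_ediskO {h : ℝ × ℝ → ℝ} {W : Set (ℝ × ℝ)}
    (hh : ContinuousOn h W) (hWc : closure (ediskO c R) ⊆ W) : IntegrableOn h (ediskO c R) :=
  ((hh.mono hWc).integrableOn_compact isBounded_ediskO.isCompact_closure).mono_set subset_closure

theorem integral_ediskO_radial (hR : 0 ≤ R) (g : ℝ → ℝ) :
    ∫ x in ediskO c R, g ((x.1 - c.1) ^ 2 + (x.2 - c.2) ^ 2) =
      2 * π * ∫ r in (0 : ℝ)..R, r * g (r ^ 2) := by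
  set F : ℝ × ℝ → ℝ := (ediskO 0 R).indicator fun y => g (y.1 ^ 2 + y.2 ^ 2)
  have hpolar : ∀ p ∈ polarCoord.target,
      p.1 • F (polarCoord.symm p) = (Iio R).indicator (fun r => r * g (r ^ 2)) p.1 * 1 := by
    rintro ⟨r, θ⟩ ⟨hr : 0 < r, -⟩
    have hsq : (r * cos θ) ^ 2 + (r * sin θ) ^ 2 = r ^ 2 := by
      linear_combination r ^ 2 * sin_sq_add_cos_sq θ
    have hmem : r < R ↔ r ^ 2 < R ^ 2 := (pow_lt_pow_iff_left₀ hr.le hR two_ne_zero).symm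
    simp only [F, polarCoord_symm_apply, indicator, ediskO, mem_ofPred_eq, Prod.fst_zero,
      Prod.snd_zero, sub_zero, hsq, mem_Iio, hmem, smul_eq_mul, mul_one]
    split_ifs <;> simp
  calc ∫ x in ediskO c R, g ((x.1 - c.1) ^ 2 + (x.2 - c.2) ^ 2)
      = ∫ x, F (x - c) := by
        rw [← integral_indicator measurableSet_ediskO]
        congr 1 with x
        have hmem : x - c ∈ ediskO 0 R ↔ x ∈ ediskO c R := by simp [ediskO]
        by_cases hx : x ∈ ediskO c R
        · simp [F, indicator_of_mem hx, indicator_of_mem (hmem.2 hx)]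
        · simp [F, indicator_of_notMem hx, indicator_of_notMem (mt hmem.1 hx)]
    _ = ∫ p in Ioi 0 ×ˢ Ioo (-π) π, (Iio R).indicator (fun r => r * g (r ^ 2)) p.1 * 1 := by
        rw [integral_sub_right_eq_self, ← integral_comp_polarCoord_symm,
          setIntegral_congr_fun polarCoord.open_target.measurableSet hpolar]
        rfl
    _ = 2 * π * ∫ r in (0 : ℝ)..R, r * g (r ^ 2) := by
        rw [Measure.volume_eq_prod]
        refine (setIntegral_prod_mul _ (fun _ : ℝ => (1 : ℝ)) _ _).trans ?_
        rw [setIntegral_const, setIntegral_indicator measurableSet_Iio, Ioi_inter_Iio,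
          intervalIntegral.integral_of_le hR, integral_Ioc_eq_integral_Ioo, measureReal_def,
          Real.volume_Ioo, ENNReal.toReal_ofReal (by linarith [pi_pos])]
        simp only [smul_eq_mul, mul_one]
        ring

lemma integral_ediskO_sq_add_sq (hR : 0 ≤ R) :
    ∫ x in ediskO c R, ((x.1 - c.1) ^ 2 + (x.2 - c.2) ^ 2) = π * R ^ 4 / 2 := by
  refine (integral_ediskO_radial hR id).trans ?_
  simp only [id, ← pow_succ', integral_pow]
  ring

variable (c R) in
def diskProfile (x : ℝ × ℝ) : ℝ := R ^ 2 - ((x.1 - c.1) ^ 2 + (x.2 - c.2) ^ 2)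

lemma integral_ediskO_diskProfile_sub (hR : 0 ≤ R) (ε : ℝ) :
    ∫ x in ediskO c R, (diskProfile c R x - ε) = π * R ^ 4 / 2 - π * ε * R ^ 2 := by
  have hpoly : (fun r : ℝ => r * (R ^ 2 - r ^ 2 - ε)) = fun r => (R ^ 2 - ε) * r - r ^ 3 := by
    ext; ring
  refine (integral_ediskO_radial hR (fun s => R ^ 2 - s - ε)).trans ?_
  rw [hpoly, intervalIntegral.integral_sub,
    intervalIntegral.integral_const_mul, integral_id, integral_pow]
  · ring
  all_goals exact Continuous.intervalIntegrable (by fun_prop) _ _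

@[fun_prop]
lemma continuous_diskProfile : Continuous (diskProfile c R) := by
  unfold diskProfile
  fun_prop

lemma diskProfile_nonpos {x : ℝ × ℝ} (hx : x ∉ ediskO c R) : diskProfile c R x ≤ 0 := by
  simp only [ediskO, mem_ofPred_eq, not_lt] at hx
  rw [diskProfile]
  linarith

lemma hasFDerivAt_diskProfile (x : ℝ × ℝ) :
    HasFDerivAt (diskProfile c R) ((-2 * (x.1 - c.1)) • ContinuousLinearMap.fst ℝ ℝ ℝ +
      (-2 * (x.2 - c.2)) • ContinuousLinearMap.snd ℝ ℝ ℝ) x := by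
  have h1 := ((hasFDerivAt_fst (𝕜 := ℝ) (p := x)).sub_const c.1).pow 2
  have h2 := ((hasFDerivAt_snd (𝕜 := ℝ) (p := x)).sub_const c.2).pow 2
  refine ((hasFDerivAt_const (R ^ 2) x).sub (h1.add h2)).congr_fderiv ?_
  ext <;> simp

end Disk

lemma mul_add_mul_le_two_div_add_div_eight {b : ℝ} (hb : 0 < b) (u₁ u₂ v₁ v₂ : ℝ) :
    u₁ * v₁ + u₂ * v₂ ≤ 2 / b * (u₁ ^ 2 + u₂ ^ 2) + b / 8 * (v₁ ^ 2 + v₂ ^ 2) := by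
  rw [div_mul_eq_mul_div, div_mul_eq_mul_div, div_add_div _ _ hb.ne' (by norm_num),
    le_div_iff₀ (by positivity)]
  nlinarith [sq_nonneg (4 * u₁ - b * v₁), sq_nonneg (4 * u₂ - b * v₂)]

section Weight

variable {c : ℝ × ℝ} {R ε : ℝ}

lemma pd1_ramp_comp_diskProfile (hε : 0 < ε) (x : ℝ × ℝ) :
    pd1 (ramp ε ∘ diskProfile c R) x = -2 * (x.1 - c.1) * rampDeriv ε (diskProfile c R x) := by
  simp [pd1, ((hasDerivAt_ramp hε _).comp_hasFDerivAt x (hasFDerivAt_diskProfile x)).fderiv]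
  ring

lemma pd2_ramp_comp_diskProfile (hε : 0 < ε) (x : ℝ × ℝ) :
    pd2 (ramp ε ∘ diskProfile c R) x = -2 * (x.2 - c.2) * rampDeriv ε (diskProfile c R x) := by
  simp [pd2, ((hasDerivAt_ramp hε _).comp_hasFDerivAt x (hasFDerivAt_diskProfile x)).fderiv]
  ring

lemma pd1_sq_add_pd2_sq_ramp_comp_diskProfile_le (hε : 0 < ε) (x : ℝ × ℝ) :
    pd1 (ramp ε ∘ diskProfile c R) x ^ 2 + pd2 (ramp ε ∘ diskProfile c R) x ^ 2 ≤
      4 * ((x.1 - c.1) ^ 2 + (x.2 - c.2) ^ 2) := by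
  rw [pd1_ramp_comp_diskProfile hε, pd2_ramp_comp_diskProfile hε]
  nlinarith [mul_le_mul_of_nonneg_left (sq_rampDeriv_le_one hε (diskProfile c R x))
    (by positivity : 0 ≤ (x.1 - c.1) ^ 2 + (x.2 - c.2) ^ 2)]

lemma pd2_mul_sub_pd1_mul_le {b : ℝ} (hε : 0 < ε) (hb : 0 < b) (x a : ℝ × ℝ) :
    pd2 (ramp ε ∘ diskProfile c R) x * a.1 - pd1 (ramp ε ∘ diskProfile c R) x * a.2 ≤
      2 / b * (a.1 ^ 2 + a.2 ^ 2) + b / 2 * ((x.1 - c.1) ^ 2 + (x.2 - c.2) ^ 2) := by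
  nlinarith [pd1_sq_add_pd2_sq_ramp_comp_diskProfile_le (c := c) (R := R) hε x,
    mul_add_mul_le_two_div_add_div_eight hb a.1 a.2 (pd2 (ramp ε ∘ diskProfile c R) x)
      (-pd1 (ramp ε ∘ diskProfile c R) x)]

lemma contDiff_ramp_comp_diskProfile (hε : 0 < ε) : ContDiff ℝ 1 (ramp ε ∘ diskProfile c R) :=
  (contDiff_ramp hε).comp (by unfold diskProfile; fun_prop)

lemma ramp_comp_diskProfile_of_notMem (hε : 0 < ε) {x : ℝ × ℝ} (hx : x ∉ ediskO c R) :
    (ramp ε ∘ diskProfile c R) x = 0 :=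
  ramp_of_nonpos hε (diskProfile_nonpos hx)

theorem setIntegral_ramp_comp_diskProfile_mul_curl2_eq {A : ℝ × ℝ → ℝ × ℝ} {W : Set (ℝ × ℝ)}
    (hε : 0 < ε) (hW : IsOpen W) (hWc : closure (ediskO c R) ⊆ W) (hA : ContDiffOn ℝ 1 A W) :
    ∫ x in ediskO c R, (ramp ε ∘ diskProfile c R) x * curl2 A x =
      ∫ x in ediskO c R, (pd2 (ramp ε ∘ diskProfile c R) x * (A x).1 -
        pd1 (ramp ε ∘ diskProfile c R) x * (A x).2) := by
  have hw0 {x : ℝ × ℝ} (hx : x ∉ ediskO c R) := ramp_comp_diskProfile_of_notMem hε hx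
  rw [setIntegral_eq_integral_of_forall_compl_eq_zero fun x hx => by rw [hw0 hx, zero_mul],
    setIntegral_eq_integral_of_forall_compl_eq_zero fun x hx => ?_]
  · refine integral_mul_curl2_eq hW hA (contDiff_ramp_comp_diskProfile hε)
      (.intro isBounded_ediskO.isCompact_closure fun x hx => hw0 (mt (subset_closure ·) hx))
      ((closure_mono fun x hx => ?_).trans hWc)
    by_contra h
    exact mem_support.1 hx (hw0 h)
  · simp [pd1_ramp_comp_diskProfile hε, pd2_ramp_comp_diskProfile hε,
      rampDeriv_of_nonpos hε (diskProfile_nonpos hx)]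

end Weight

theorem le_integral_sq_add_of_le_curl2 {c : ℝ × ℝ} {R b₀ ε : ℝ} {A : ℝ × ℝ → ℝ × ℝ}
    {W : Set (ℝ × ℝ)} (hR : 0 ≤ R) (hb₀ : 0 < b₀) (hε : 0 < ε) (hW : IsOpen W)
    (hWc : closure (ediskO c R) ⊆ W) (hA : ContDiffOn ℝ 1 A W)
    (hcurl : ∀ x ∈ ediskO c R, b₀ ≤ curl2 A x) :
    π / 8 * b₀ ^ 2 * R ^ 4 ≤
      (∫ x in ediskO c R, ((A x).1 ^ 2 + (A x).2 ^ 2)) + π / 2 * b₀ ^ 2 * R ^ 2 * ε := by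
  set D := ediskO c R
  set w := ramp ε ∘ diskProfile c R
  have hint {h : ℝ × ℝ → ℝ} (hh : ContinuousOn h W) : IntegrableOn h D :=
    hh.integrableOn_ediskO hWc
  have hw : ContDiff ℝ 1 w := contDiff_ramp_comp_diskProfile hε
  set flux := fun x => pd2 w x * (A x).1 - pd1 w x * (A x).2
  have hflux : ContinuousOn flux W :=
    (((hw.continuous_fderiv one_ne_zero).clm_apply continuous_const).continuousOn.mul
      hA.continuousOn.fst).sub
    (((hw.continuous_fderiv one_ne_zero).clm_apply continuous_const).continuousOn.mul
      hA.continuousOn.snd)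
  have hlower : b₀ * (π * R ^ 4 / 2 - π * ε * R ^ 2) ≤ ∫ x in D, w x * curl2 A x := by
    rw [← integral_ediskO_diskProfile_sub hR, ← integral_const_mul]
    refine setIntegral_mono_on (hint (by fun_prop)) (hint ?_) measurableSet_ediskO
      fun x hx => ?_
    · exact hw.continuous.continuousOn.mul (hA.continuousOn_curl2 hW)
    · have h1 : diskProfile c R x - ε ≤ w x := sub_le_ramp hε _
      have h2 : 0 ≤ w x := ramp_nonneg hε _
      nlinarith [hcurl x hx]
  have hparts : ∫ x in D, w x * curl2 A x = ∫ x in D, flux x :=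
    setIntegral_ramp_comp_diskProfile_mul_curl2_eq hε hW hWc hA
  have hupper : ∫ x in D, flux x ≤
      2 / b₀ * (∫ x in D, ((A x).1 ^ 2 + (A x).2 ^ 2)) + b₀ / 2 * (π * R ^ 4 / 2) := by
    have hA2 : ContinuousOn (fun x => 2 / b₀ * ((A x).1 ^ 2 + (A x).2 ^ 2)) W :=
      continuousOn_const.mul ((hA.continuousOn.fst.pow 2).add (hA.continuousOn.snd.pow 2))
    have hsq : ContinuousOn (fun x : ℝ × ℝ => b₀ / 2 * ((x.1 - c.1) ^ 2 + (x.2 - c.2) ^ 2)) W :=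
      Continuous.continuousOn (by fun_prop)
    calc ∫ x in D, flux x
        ≤ ∫ x in D, (2 / b₀ * ((A x).1 ^ 2 + (A x).2 ^ 2) +
            b₀ / 2 * ((x.1 - c.1) ^ 2 + (x.2 - c.2) ^ 2)) :=
          setIntegral_mono_on (hint hflux) (hint (hA2.add hsq)) measurableSet_ediskO
            fun x _ => pd2_mul_sub_pd1_mul_le hε hb₀ x (A x)
      _ = _ := by
          rw [integral_add (hint hA2) (hint hsq), integral_const_mul,
            integral_const_mul, integral_ediskO_sq_add_sq hR]
  have hcancel : b₀ / 2 * (2 / b₀ * ∫ x in D, ((A x).1 ^ 2 + (A x).2 ^ 2)) =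
      ∫ x in D, ((A x).1 ^ 2 + (A x).2 ^ 2) := by
    field_simp
  nlinarith [mul_le_mul_of_nonneg_left ((hlower.trans_eq hparts).trans hupper)
    (by positivity : 0 ≤ b₀ / 2)]

/-- Lower bound on a vector potential over a disk: if `A` is `C¹` on a neighbourhood of the
closed disk of radius `R` and `curl A ≥ b₀ > 0` on the disk, then
`∫_{D_R} |A|² ≥ (π/8) b₀² R⁴`. -/
theorem stmt1 (c : ℝ × ℝ) (R : ℝ) (hR : 0 < R) (b₀ : ℝ) (hb₀ : 0 < b₀)
    (A : ℝ × ℝ → ℝ × ℝ) (W : Set (ℝ × ℝ)) (hW : IsOpen W)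
    (hWc : closure (ediskO c R) ⊆ W) (hA : ContDiffOn ℝ 1 A W)
    (hcurl : ∀ x ∈ ediskO c R, b₀ ≤ curl2 A x) :
    (Real.pi / 8) * b₀ ^ 2 * R ^ 4 ≤ ∫ x in ediskO c R, ((A x).1 ^ 2 + (A x).2 ^ 2) := by
  refine le_of_forall_pos_le_add fun δ hδ => ?_
  have hε : 0 < δ / (π / 2 * b₀ ^ 2 * R ^ 2) := by positivity
  have := le_integral_sq_add_of_le_curl2 hR.le hb₀ hε hW hWc hA hcurl
  rwa [mul_div_cancel₀ _ (by positivity)] at this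
end
end

section
/- Trace inequality for second derivatives of eigenvalues (Lemma 5.1): Let n ∈ ℕ, let I ⊆ ℝ be an open interval, and for each s ∈ I let T(s) be an n×n Hermitian matrix. Assume there exist twice continuously differentiable maps τ_α : I → ℝ and u_α : I → ℂⁿ (α = 1,…,n) such that for every s ∈ I the vectors u₁(s),…,u_n(s) form an orthonormal basis of ℂⁿ and T(s) = Σ_α τ_α(s) |u_α(s)⟩⟨u_α(s)|. Let F : ℝ → ℝ be monotone nondecreasing. Then for every s ∈ I: Tr( T''(s) · F(T(s)) ) ≤ Σ_{α=1}^n τ_α''(s) F(τ_α(s)), where T''(s) is the entrywise second derivative and F(T(s)) := Σ_β F(τ_β(s)) |u_β(s)⟩⟨u_β(s)|. -/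
/-!
Fix `M = F(T(s)) = Σ_β F(τ_β(s)) |u_β(s)⟩⟨u_β(s)|` and differentiate
`t ↦ Tr(T(t) M) = Σ_α τ_α(t) ⟨u_α(t), M u_α(t)⟩` twice at `t = s`. Since each `u_α(s)` is an
eigenvector of `M`, differentiating `⟨u_α, u_β⟩ = δ_αβ` kills the first-order term and turns
the second-order one into
`Tr(T''(s) M) = Σ_α τ_α'' F(τ_α) + Σ_{α,β} 2 τ_α (F(τ_β) - F(τ_α)) |⟨u_β, u_α'⟩|²`.
Orthonormality also makes the weights `|⟨u_β, u_α'⟩|²` symmetric in `α, β`, so the double sum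
equals `-Σ_{α,β} (τ_α - τ_β) (F(τ_α) - F(τ_β)) |⟨u_β, u_α'⟩|²`, which is `≤ 0` as `F` is monotone.
-/

open scoped ComplexOrder

noncomputable section

/-- The rank-one matrix `|u⟩⟨u|` associated to a vector `u ∈ ℂⁿ`. -/
def rankOneMat {n : ℕ} (u : Fin n → ℂ) : Matrix (Fin n) (Fin n) ℂ :=
  Matrix.of fun i j => u i * (starRingEnd ℂ) (u j)

open Matrix Filter Topology

section SecondDeriv

variable {𝕜 : Type*} [NontriviallyNormedField 𝕜] {F : Type*} [NormedAddCommGroup F]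
  [NormedSpace 𝕜 F]

def HasSecondDerivAt (f f' : 𝕜 → F) (f'' : F) (x : 𝕜) : Prop :=
  (∀ᶠ y in 𝓝 x, HasDerivAt f (f' y) y) ∧ HasDerivAt f' f'' x

namespace HasSecondDerivAt

variable {f g f' : 𝕜 → F} {f'' : F} {x : 𝕜}

theorem hasDerivAt (h : HasSecondDerivAt f f' f'' x) : HasDerivAt f (f' x) x :=
  h.1.self_of_nhds

theorem deriv_deriv (h : HasSecondDerivAt f f' f'' x) : deriv (deriv f) x = f'' := by
  rw [(show deriv f =ᶠ[𝓝 x] f' from h.1.mono fun _ hy => hy.deriv).deriv_eq]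
  exact h.2.deriv

theorem congr_of_eventuallyEq (h : HasSecondDerivAt f f' f'' x) (hg : g =ᶠ[𝓝 x] f) :
    HasSecondDerivAt g f' f'' x :=
  ⟨(h.1.and hg.eventually_nhds).mono fun _ hy => hy.1.congr_of_eventuallyEq hy.2, h.2⟩

theorem eq_zero_of_eventuallyEq_const (h : HasSecondDerivAt f f' f'' x) {a : F}
    (hf : f =ᶠ[𝓝 x] fun _ => a) : f' x = 0 ∧ f'' = 0 := by
  have hc : HasSecondDerivAt f (fun _ => 0) 0 x :=
    HasSecondDerivAt.congr_of_eventuallyEq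
      ⟨Eventually.of_forall fun y => hasDerivAt_const y a, hasDerivAt_const x 0⟩ hf
  exact ⟨h.hasDerivAt.unique hc.hasDerivAt, h.deriv_deriv.symm.trans hc.deriv_deriv⟩

theorem sum {ι : Type*} {s : Finset ι} {f f' : ι → 𝕜 → F} {f'' : ι → F}
    (h : ∀ i ∈ s, HasSecondDerivAt (f i) (f' i) (f'' i) x) :
    HasSecondDerivAt (fun y => ∑ i ∈ s, f i y) (fun y => ∑ i ∈ s, f' i y) (∑ i ∈ s, f'' i) x :=
  ⟨((eventually_all_finset s).2 fun i hi => (h i hi).1).mono fun _ hy => HasDerivAt.fun_sum hy,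
    HasDerivAt.fun_sum fun i hi => (h i hi).2⟩

theorem smul {𝕜' : Type*} [NontriviallyNormedField 𝕜'] [NormedAlgebra 𝕜 𝕜'] [NormedSpace 𝕜' F]
    [IsScalarTower 𝕜 𝕜' F] {c c' : 𝕜 → 𝕜'} {c'' : 𝕜'} (hc : HasSecondDerivAt c c' c'' x)
    (hf : HasSecondDerivAt f f' f'' x) :
    HasSecondDerivAt (fun y => c y • f y) (fun y => c y • f' y + c' y • f y)
      (c'' • f x + (2 : 𝕜') • c' x • f' x + c x • f'') x := by
  refine ⟨(hc.1.and hf.1).mono fun _ hy => hy.1.smul hy.2, ?_⟩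
  convert (hc.hasDerivAt.fun_smul hf.2).fun_add (hc.2.fun_smul hf.hasDerivAt) using 1
  module

theorem mul_const {𝔸 : Type*} [NormedRing 𝔸] [NormedAlgebra 𝕜 𝔸] {f f' : 𝕜 → 𝔸} {f'' : 𝔸}
    (h : HasSecondDerivAt f f' f'' x) (a : 𝔸) :
    HasSecondDerivAt (fun y => f y * a) (fun y => f' y * a) (f'' * a) x :=
  ⟨h.1.mono fun _ hy => hy.mul_const a, h.2.mul_const a⟩

end HasSecondDerivAt

theorem ContDiffOn.hasSecondDerivAt {f : 𝕜 → F} {s : Set 𝕜} (hf : ContDiffOn 𝕜 2 f s)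
    (hs : IsOpen s) {x : 𝕜} (hx : x ∈ s) : HasSecondDerivAt f (deriv f) (deriv (deriv f) x) x :=
  ⟨eventually_of_mem (hs.mem_nhds hx) fun _ hy =>
      ((hf.differentiableOn (by norm_num)).differentiableAt (hs.mem_nhds hy)).hasDerivAt,
    (((hf.deriv_of_isOpen hs (by norm_num : (1 : WithTop ℕ∞) + 1 ≤ 2)).differentiableOn
      one_ne_zero).differentiableAt (hs.mem_nhds hx)).hasDerivAt⟩

end SecondDeriv

section DotProduct

variable {m n 𝕜 : Type*} [Fintype m] [RCLike 𝕜]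

theorem HasDerivAt.star_dotProduct {v w : ℝ → m → 𝕜} {v' w' : m → 𝕜} {t : ℝ}
    (hv : HasDerivAt v v' t) (hw : HasDerivAt w w' t) :
    HasDerivAt (fun r => star (v r) ⬝ᵥ w r) (star v' ⬝ᵥ w t + star (v t) ⬝ᵥ w') t := by
  simpa only [dotProduct, Pi.star_apply, ← Finset.sum_add_distrib] using
    HasDerivAt.fun_sum fun i _ => (hasDerivAt_pi.1 hv i).star.fun_mul (hasDerivAt_pi.1 hw i)

theorem HasDerivAt.mulVec (M : Matrix n m 𝕜) {w : ℝ → m → 𝕜} {w' : m → 𝕜} {t : ℝ}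
    (hw : HasDerivAt w w' t) : HasDerivAt (fun r => M *ᵥ w r) (M *ᵥ w') t :=
  hasDerivAt_pi.2 fun i =>
    HasDerivAt.fun_sum fun j _ => (hasDerivAt_pi.1 hw j).const_mul (M i j)

namespace HasSecondDerivAt

variable {v w v' w' : ℝ → m → 𝕜} {v'' w'' : m → 𝕜} {t : ℝ}

theorem star_dotProduct (hv : HasSecondDerivAt v v' v'' t) (hw : HasSecondDerivAt w w' w'' t) :
    HasSecondDerivAt (fun r => star (v r) ⬝ᵥ w r)
      (fun r => star (v' r) ⬝ᵥ w r + star (v r) ⬝ᵥ w' r)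
      (star v'' ⬝ᵥ w t + 2 * (star (v' t) ⬝ᵥ w' t) + star (v t) ⬝ᵥ w'') t := by
  refine ⟨(hv.1.and hw.1).mono fun _ h => h.1.star_dotProduct h.2, ?_⟩
  convert (hv.2.star_dotProduct hw.hasDerivAt).fun_add (hv.hasDerivAt.star_dotProduct hw.2)
    using 1
  ring

theorem mulVec [Fintype n] (M : Matrix n m 𝕜) (hw : HasSecondDerivAt w w' w'' t) :
    HasSecondDerivAt (fun r => M *ᵥ w r) (fun r => M *ᵥ w' r) (M *ᵥ w'') t :=
  ⟨hw.1.mono fun _ h => h.mulVec M, hw.2.mulVec M⟩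

end HasSecondDerivAt

theorem norm_star_dotProduct_eq_of_add_eq_zero {a b a' b' : m → 𝕜}
    (h : star a' ⬝ᵥ b + star a ⬝ᵥ b' = 0) :
    ‖star b ⬝ᵥ a'‖ = ‖star a ⬝ᵥ b'‖ := by
  rw [star_dotProduct, eq_neg_of_add_eq_zero_left h, norm_star, norm_neg]

end DotProduct

section Trace

variable {ι n 𝕜 : Type*} [Fintype ι] [Fintype n] [RCLike 𝕜]

theorem trace_vecMulVec_star_mul (u : n → 𝕜) (M : Matrix n n 𝕜) :
    trace (vecMulVec u (star u) * M) = star u ⬝ᵥ (M *ᵥ u) := by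
  rw [trace_mul_comm, mul_vecMulVec, trace_vecMulVec, dotProduct_comm]

theorem trace_sum_smul_vecMulVec_star_mul (τ : ι → ℝ) (u : ι → n → 𝕜) (M : Matrix n n 𝕜) :
    trace ((∑ α, (τ α : 𝕜) • vecMulVec (u α) (star (u α))) * M)
      = ∑ α, τ α • (star (u α) ⬝ᵥ (M *ᵥ u α)) := by
  simp only [Finset.sum_mul, trace_sum, smul_mul, trace_smul, trace_vecMulVec_star_mul,
    RCLike.real_smul_eq_coe_mul, smul_eq_mul]

variable {T : ℝ → Matrix n n 𝕜} {τ τ' : ι → ℝ → ℝ} {τ'' : ι → ℝ} {u u' : ι → ℝ → n → 𝕜}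
  {u'' : ι → n → 𝕜} {s : ℝ}

theorem hasSecondDerivAt_trace_mul
    (hT : ∀ᶠ t in 𝓝 s, T t = ∑ α, (τ α t : 𝕜) • vecMulVec (u α t) (star (u α t)))
    (hτ : ∀ α, HasSecondDerivAt (τ α) (τ' α) (τ'' α) s)
    (hu : ∀ α, HasSecondDerivAt (u α) (u' α) (u'' α) s) (M : Matrix n n 𝕜) :
    HasSecondDerivAt (fun t => trace (T t * M))
      (fun t => ∑ α, (τ α t • (star (u' α t) ⬝ᵥ (M *ᵥ u α t) + star (u α t) ⬝ᵥ (M *ᵥ u' α t))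
        + τ' α t • (star (u α t) ⬝ᵥ (M *ᵥ u α t))))
      (∑ α, (τ'' α • (star (u α s) ⬝ᵥ (M *ᵥ u α s))
        + (2 : ℝ) • τ' α s • (star (u' α s) ⬝ᵥ (M *ᵥ u α s) + star (u α s) ⬝ᵥ (M *ᵥ u' α s))
        + τ α s • (star (u'' α) ⬝ᵥ (M *ᵥ u α s) + 2 * (star (u' α s) ⬝ᵥ (M *ᵥ u' α s))
          + star (u α s) ⬝ᵥ (M *ᵥ u'' α)))) s :=
  (HasSecondDerivAt.sum fun α _ => (hτ α).smul ((hu α).star_dotProduct ((hu α).mulVec M)))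
    |>.congr_of_eventuallyEq (hT.mono fun t ht => by
      simp only [ht, trace_sum_smul_vecMulVec_star_mul])

theorem trace_of_deriv_deriv_mul_eq
    (hT : ∀ᶠ t in 𝓝 s, T t = ∑ α, (τ α t : 𝕜) • vecMulVec (u α t) (star (u α t)))
    (hτ : ∀ α, HasSecondDerivAt (τ α) (τ' α) (τ'' α) s)
    (hu : ∀ α, HasSecondDerivAt (u α) (u' α) (u'' α) s) (M : Matrix n n 𝕜) :
    trace (of (fun i j => deriv (fun t => deriv (fun r => T r i j) t) s) * M)
      = ∑ α, (τ'' α • (star (u α s) ⬝ᵥ (M *ᵥ u α s))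
        + (2 : ℝ) • τ' α s • (star (u' α s) ⬝ᵥ (M *ᵥ u α s) + star (u α s) ⬝ᵥ (M *ᵥ u' α s))
        + τ α s • (star (u'' α) ⬝ᵥ (M *ᵥ u α s) + 2 * (star (u' α s) ⬝ᵥ (M *ᵥ u' α s))
          + star (u α s) ⬝ᵥ (M *ᵥ u'' α))) := by
  classical
  -- Each entry `T t i j = trace (T t * single j i 1)` is a traced family of the same form.
  have hentry i j := (hasSecondDerivAt_trace_mul hT hτ hu (single j i 1)).congr_of_eventuallyEq
    (Eventually.of_forall fun t => (by simp [trace_mul_single] : T t i j = _))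
  have htrace := HasSecondDerivAt.sum fun i (_ : i ∈ Finset.univ) =>
    HasSecondDerivAt.sum fun j (_ : j ∈ Finset.univ) => (hentry i j).mul_const (M j i)
  rw [← (hasSecondDerivAt_trace_mul hT hτ hu M).deriv_deriv]
  simp only [trace, diag, mul_apply, of_apply, (hentry _ _).deriv_deriv]
  exact htrace.deriv_deriv.symm

end Trace

section Spectral

variable {ι n 𝕜 : Type*} [Fintype ι] [Fintype n] [RCLike 𝕜]

def spectralMatrix (u : ι → n → 𝕜) (c : ι → ℝ) : Matrix n n 𝕜 :=
  ∑ β, (c β : 𝕜) • vecMulVec (u β) (star (u β))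

theorem dotProduct_spectralMatrix_mulVec (u : ι → n → 𝕜) (c : ι → ℝ) (x y : n → 𝕜) :
    x ⬝ᵥ (spectralMatrix u c *ᵥ y) = ∑ β, c β * (x ⬝ᵥ u β) * (star (u β) ⬝ᵥ y) := by
  simp only [spectralMatrix, sum_mulVec, smul_mulVec, vecMulVec_mulVec, dotProduct_sum,
    dotProduct_smul, op_smul_eq_smul, smul_eq_mul]
  exact Finset.sum_congr rfl fun β _ => by ring

theorem star_dotProduct_spectralMatrix_mulVec_self (u : ι → n → 𝕜) (c : ι → ℝ) (y : n → 𝕜) :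
    star y ⬝ᵥ (spectralMatrix u c *ᵥ y) = ∑ β, c β * ‖star (u β) ⬝ᵥ y‖ ^ 2 := by
  rw [dotProduct_spectralMatrix_mulVec]
  push_cast
  refine Finset.sum_congr rfl fun β _ => ?_
  rw [star_dotProduct, mul_assoc, RCLike.star_def, RCLike.conj_mul]

variable [DecidableEq ι] {u : ι → n → 𝕜}

theorem star_dotProduct_spectralMatrix_mulVec
    (hu : ∀ α β, star (u α) ⬝ᵥ u β = if α = β then 1 else 0) (c : ι → ℝ) (α : ι) (y : n → 𝕜) :
    star (u α) ⬝ᵥ (spectralMatrix u c *ᵥ y) = c α * (star (u α) ⬝ᵥ y) := by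
  simp [dotProduct_spectralMatrix_mulVec, hu]

theorem dotProduct_spectralMatrix_mulVec_basis
    (hu : ∀ α β, star (u α) ⬝ᵥ u β = if α = β then 1 else 0) (c : ι → ℝ) (α : ι) (x : n → 𝕜) :
    x ⬝ᵥ (spectralMatrix u c *ᵥ u α) = c α * (x ⬝ᵥ u α) := by
  simp [dotProduct_spectralMatrix_mulVec, hu, mul_comm]

end Spectral

section OrthonormalBasis

variable {n 𝕜 : Type*} [Fintype n] [DecidableEq n] [RCLike 𝕜] {u : n → n → 𝕜}

theorem spectralMatrix_one (hu : ∀ α β, star (u α) ⬝ᵥ u β = if α = β then 1 else 0) :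
    spectralMatrix u (fun _ => 1) = 1 := by
  set U : Matrix n n 𝕜 := of fun i β => u β i
  have hU : star U * U = 1 := by
    ext α β
    simpa [U, mul_apply, one_apply, dotProduct] using hu α β
  rw [← mul_eq_one_comm.1 hU]
  ext i j
  simp [spectralMatrix, U, mul_apply, Matrix.sum_apply, vecMulVec_apply]

theorem star_dotProduct_self_eq_sum (hu : ∀ α β, star (u α) ⬝ᵥ u β = if α = β then 1 else 0)
    (y : n → 𝕜) : star y ⬝ᵥ y = ((∑ β, ‖star (u β) ⬝ᵥ y‖ ^ 2 : ℝ) : 𝕜) := by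
  simpa [spectralMatrix_one hu] using star_dotProduct_spectralMatrix_mulVec_self u (fun _ => 1) y

theorem spectralMatrix_second_variation
    (hu : ∀ α β, star (u α) ⬝ᵥ u β = if α = β then 1 else 0) (c : n → ℝ) (α : n)
    {a' a'' : n → 𝕜} (h : star a'' ⬝ᵥ u α + 2 * (star a' ⬝ᵥ a') + star (u α) ⬝ᵥ a'' = 0) :
    star a'' ⬝ᵥ (spectralMatrix u c *ᵥ u α) + 2 * (star a' ⬝ᵥ (spectralMatrix u c *ᵥ a'))
        + star (u α) ⬝ᵥ (spectralMatrix u c *ᵥ a'')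
      = ((2 * ∑ β, (c β - c α) * ‖star (u β) ⬝ᵥ a'‖ ^ 2 : ℝ) : 𝕜) := by
  rw [dotProduct_spectralMatrix_mulVec_basis hu, star_dotProduct_spectralMatrix_mulVec_self,
    star_dotProduct_spectralMatrix_mulVec hu]
  rw [star_dotProduct_self_eq_sum hu] at h
  push_cast at h ⊢
  simp only [sub_mul, Finset.sum_sub_distrib, ← Finset.mul_sum]
  linear_combination (c α : 𝕜) * h

theorem sum_second_variation_spectralMatrix {u' u'' : n → n → 𝕜}
    (hu : ∀ α β, star (u α) ⬝ᵥ u β = if α = β then 1 else 0)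
    (h₁ : ∀ α, star (u' α) ⬝ᵥ u α + star (u α) ⬝ᵥ u' α = 0)
    (h₂ : ∀ α, star (u'' α) ⬝ᵥ u α + 2 * (star (u' α) ⬝ᵥ u' α) + star (u α) ⬝ᵥ u'' α = 0)
    (c x x' x'' : n → ℝ) :
    ∑ α, (x'' α • (star (u α) ⬝ᵥ (spectralMatrix u c *ᵥ u α))
        + (2 : ℝ) • x' α • (star (u' α) ⬝ᵥ (spectralMatrix u c *ᵥ u α)
          + star (u α) ⬝ᵥ (spectralMatrix u c *ᵥ u' α))
        + x α • (star (u'' α) ⬝ᵥ (spectralMatrix u c *ᵥ u α)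
          + 2 * (star (u' α) ⬝ᵥ (spectralMatrix u c *ᵥ u' α))
          + star (u α) ⬝ᵥ (spectralMatrix u c *ᵥ u'' α)))
      = ((∑ α, x'' α * c α
          + ∑ α, ∑ β, x α * (c β - c α) * (2 * ‖star (u β) ⬝ᵥ u' α‖ ^ 2) : ℝ) : 𝕜) := by
  push_cast
  rw [← Finset.sum_add_distrib]
  refine Finset.sum_congr rfl fun α _ => ?_
  rw [spectralMatrix_second_variation hu c α (h₂ α)]
  simp only [dotProduct_spectralMatrix_mulVec_basis hu, star_dotProduct_spectralMatrix_mulVec hu,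
    ← mul_add, h₁ α, hu, if_true, RCLike.real_smul_eq_coe_mul]
  push_cast
  simp only [Finset.mul_sum, mul_one, mul_zero, add_zero]
  exact congrArg _ (Finset.sum_congr rfl fun β _ => by ring)

end OrthonormalBasis

theorem sum_sum_mul_sub_mul_nonpos {ι : Type*} [Fintype ι] {f : ℝ → ℝ} (hf : Monotone f)
    (x : ι → ℝ) {N : ι → ι → ℝ} (hN : ∀ a b, N a b = N b a) (hN₀ : ∀ a b, 0 ≤ N a b) :
    ∑ a, ∑ b, x a * (f (x b) - f (x a)) * N a b ≤ 0 := by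
  have hpair a b : x a * (f (x b) - f (x a)) * N a b + x b * (f (x a) - f (x b)) * N b a ≤ 0 := by
    have hmono : 0 ≤ (x a - x b) * (f (x a) - f (x b)) := by
      rcases le_total (x a) (x b) with h | h
      · exact mul_nonneg_of_nonpos_of_nonpos (sub_nonpos.2 h) (sub_nonpos.2 (hf h))
      · exact mul_nonneg (sub_nonneg.2 h) (sub_nonneg.2 (hf h))
    rw [hN b a]
    nlinarith [mul_nonneg hmono (hN₀ a b)]
  have hsum := Finset.sum_nonpos fun a (_ : a ∈ Finset.univ) =>
    Finset.sum_nonpos fun b (_ : b ∈ Finset.univ) => hpair a b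
  simp only [Finset.sum_add_distrib] at hsum
  rw [Finset.sum_comm (f := fun a b => x b * (f (x a) - f (x b)) * N b a)] at hsum
  linarith

theorem stmt3_general (n : ℕ) (I : Set ℝ) (hIopen : IsOpen I)
    (T : ℝ → Matrix (Fin n) (Fin n) ℂ)
    (τ : Fin n → ℝ → ℝ) (u : Fin n → ℝ → (Fin n → ℂ))
    (hτ : ∀ α, ContDiffOn ℝ 2 (τ α) I)
    (hu : ∀ α, ContDiffOn ℝ 2 (u α) I)
    (honb : ∀ s ∈ I, ∀ α β,
      (∑ i, (starRingEnd ℂ) (u α s i) * u β s i) = if α = β then 1 else 0)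
    (hdecomp : ∀ s ∈ I, T s = ∑ α, (τ α s : ℂ) • rankOneMat (u α s))
    (F : ℝ → ℝ) (hF : Monotone F) (s : ℝ) (hs : s ∈ I) :
    Matrix.trace
        ((Matrix.of fun i j => deriv (fun t => deriv (fun r => T r i j) t) s) *
          (∑ β, (F (τ β s) : ℂ) • rankOneMat (u β s)))
      ≤ ((∑ α, deriv (deriv (τ α)) s * F (τ α s) : ℝ) : ℂ) := by
  have hnear : ∀ᶠ t in 𝓝 s, t ∈ I := hIopen.mem_nhds hs
  have hτ₂ α := (hτ α).hasSecondDerivAt hIopen hs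
  have hu₂ α := (hu α).hasSecondDerivAt hIopen hs
  have horth α β := ((hu₂ α).star_dotProduct (hu₂ β)).eq_zero_of_eventuallyEq_const
    (hnear.mono fun t ht => honb t ht α β)
  change trace (_ * spectralMatrix (fun β => u β s) fun β => F (τ β s)) ≤ _
  rw [trace_of_deriv_deriv_mul_eq (hnear.mono hdecomp) hτ₂ hu₂,
    sum_second_variation_spectralMatrix (honb s hs) (fun α => (horth α α).1)
      (fun α => (horth α α).2)]
  have hcross := sum_sum_mul_sub_mul_nonpos hF (fun α => τ α s)
    (N := fun α β => 2 * ‖star (u β s) ⬝ᵥ deriv (u α) s‖ ^ 2)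
    (fun α β => by rw [norm_star_dotProduct_eq_of_add_eq_zero (horth α β).1])
    (fun _ _ => by positivity)
  exact RCLike.ofReal_le_ofReal.2 (add_le_of_nonpos_right hcross)

/-- Trace inequality for second derivatives of eigenvalues: if `T(s)` is a smoothly
diagonalized Hermitian family, `T(s) = Σ_α τ_α(s) |u_α(s)⟩⟨u_α(s)|` with orthonormal
`u_α(s)` and `C²` data, and `F` is monotone nondecreasing, then
`Tr(T''(s) F(T(s))) ≤ Σ_α τ_α''(s) F(τ_α(s))`. -/
theorem stmt3 (n : ℕ) (I : Set ℝ) (hIopen : IsOpen I) (hIconn : I.OrdConnected)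
    (T : ℝ → Matrix (Fin n) (Fin n) ℂ)
    (hHerm : ∀ s ∈ I, (T s).IsHermitian)
    (τ : Fin n → ℝ → ℝ) (u : Fin n → ℝ → (Fin n → ℂ))
    (hτ : ∀ α, ContDiffOn ℝ 2 (τ α) I)
    (hu : ∀ α, ContDiffOn ℝ 2 (u α) I)
    (honb : ∀ s ∈ I, ∀ α β,
      (∑ i, (starRingEnd ℂ) (u α s i) * u β s i) = if α = β then 1 else 0)
    (hdecomp : ∀ s ∈ I, T s = ∑ α, (τ α s : ℂ) • rankOneMat (u α s))
    (F : ℝ → ℝ) (hF : Monotone F) (s : ℝ) (hs : s ∈ I) :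
    Matrix.trace
        ((Matrix.of fun i j => deriv (fun t => deriv (fun r => T r i j) t) s) *
          (∑ β, (F (τ β s) : ℂ) • rankOneMat (u β s)))
      ≤ ((∑ α, deriv (deriv (τ α)) s * F (τ α s) : ℝ) : ℂ) :=
  stmt3_general n I hIopen T τ u hτ hu honb hdecomp F hF s hs
end
end

section
/- Support and L² bound on the block-averaging errors, plateau profile (Proposition 5.2 under condition (2.4)): Fix 0 < δ ≤ 1/3200 and ε > 0. Let u ∈ C¹(ℝ², [0,1]) satisfy u(x) = 0 for |x|_∞ ≥ 1/2 + δ and u(x) = 1 for |x|_∞ ≤ 1/2 − δ. Set N := ⌊δ^{-2}⌋ + 1. For z ∈ ℝ² define β_z(x) := u((x−z)/ε), α_z^{(1)}(x₁,x₂) := (∫_{−∞}^{x₂} β_z(x₁,s) ds) e₁, Q_z := {x : |x−z|_∞ ≤ Nε}, Q_z' := {x : |x−z|_∞ ≤ (N+δ^{-1})ε}, M_z^{(1)} := (2Nε)^{-1} 1_{Q_z} e₁, and 𝓔_z^{(1)} := M_z^{(1)} − (2Nε²)^{-1} Σ_{k=−N}^{N} ( α^{(1)}_{z+kε e₁−Nε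 e₂} − α^{(1)}_{z+kε e₁+Nε e₂} ). Then 𝓔_z^{(1)}(x) = 0 for all x ∉ Q_z', and ∫_{ℝ²} |𝓔_z^{(1)}|² dx ≤ 100 δ. -/
/-!
In the coordinates `p = ε⁻¹ (x - z)` the potentials `α` telescope: the error is
`(2Nε)⁻¹ G(p) e₁` with `G(p) = 1_{|p|_∞ ≤ N} - ∑_{|k| ≤ N} ∫_{p₂-N}^{p₂+N} u(p₁ - k, σ) dσ`.
`G` vanishes for `|p|_∞ ≥ N + 1`, and `|G| ≤ 3` since at most two translates `u(· - k, ·)` overlap.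
Off the top and bottom rows, the side columns and the `δ`-neighbourhoods of the half-integer
columns, exactly one translate contributes its full slice mass `1 ± 2δ`, so `|G| ≤ 2δ` there.
These exceptional strips have area `O(N²δ + N)`, hence `∫ G² = O(N²δ)`, and
`∫ |𝓔|² = (2N)⁻² ∫ G² = O(δ)` because `N > δ⁻²`.
-/

open MeasureTheory

noncomputable section

/-- Standard unit vector `e₁`. -/
def e1 : ℝ × ℝ := (1, 0)

/-- Standard unit vector `e₂`. -/
def e2 : ℝ × ℝ := (0, 1)

/-- The rescaled profile `β_z(x) = u((x - z)/ε)`. -/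
def betaZ (u : ℝ × ℝ → ℝ) (ε : ℝ) (z x : ℝ × ℝ) : ℝ := u (ε⁻¹ • (x - z))

/-- The vector potential `α_z^{(1)}(x) = (∫_{-∞}^{x₂} β_z(x₁, s) ds) e₁`. -/
def alpha1 (u : ℝ × ℝ → ℝ) (ε : ℝ) (z x : ℝ × ℝ) : ℝ × ℝ :=
  (∫ s in Set.Iic x.2, betaZ u ε z (x.1, s)) • e1

/-- `N = ⌊δ⁻²⌋ + 1`. -/
def blockN (δ : ℝ) : ℕ := ⌊(δ ^ 2)⁻¹⌋₊ + 1

/-- The square `Q_z = {x : |x - z|_∞ ≤ Nε}` (the norm on `ℝ × ℝ` is the sup norm). -/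
def Qz (N : ℕ) (ε : ℝ) (z : ℝ × ℝ) : Set (ℝ × ℝ) := {x | ‖x - z‖ ≤ N * ε}

/-- The enlarged square `Q_z' = {x : |x - z|_∞ ≤ (N + δ⁻¹)ε}`. -/
def Qz' (N : ℕ) (δ ε : ℝ) (z : ℝ × ℝ) : Set (ℝ × ℝ) := {x | ‖x - z‖ ≤ (N + δ⁻¹) * ε}

/-- `M_z^{(1)} = (2Nε)⁻¹ 1_{Q_z} e₁`. -/
def Mz1 (N : ℕ) (ε : ℝ) (z x : ℝ × ℝ) : ℝ × ℝ :=
  ((2 * N * ε)⁻¹ * (Qz N ε z).indicator (fun _ => (1 : ℝ)) x) • e1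

/-- The block-averaging error
`𝓔_z^{(1)} = M_z^{(1)} - (2Nε²)⁻¹ Σ_{k=-N}^{N} (α^{(1)}_{z+kεe₁-Nεe₂} - α^{(1)}_{z+kεe₁+Nεe₂})`. -/
def Ez1 (u : ℝ × ℝ → ℝ) (δ ε : ℝ) (z x : ℝ × ℝ) : ℝ × ℝ :=
  Mz1 (blockN δ) ε z x -
    (2 * (blockN δ : ℝ) * ε ^ 2)⁻¹ •
      (∑ k ∈ Finset.Icc (-(blockN δ : ℤ)) (blockN δ : ℤ),
        (alpha1 u ε (z + ((k : ℝ) * ε) • e1 - ((blockN δ : ℝ) * ε) • e2) x -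
          alpha1 u ε (z + ((k : ℝ) * ε) • e1 + ((blockN δ : ℝ) * ε) • e2) x))

open Set Metric Filter

section Integrals

variable {E : Type*} [NormedAddCommGroup E] [NormedSpace ℝ E]

theorem setIntegral_Iic_comp_inv_mul_sub (g : ℝ → E) {ε : ℝ} (hε : 0 < ε) (a b : ℝ) :
    ∫ s in Iic b, g (ε⁻¹ * (s - a)) = ε • ∫ σ in Iic (ε⁻¹ * (b - a)), g σ := by
  have hmem : ∀ s, s ∈ Iic b ↔ ε⁻¹ * (s - a) ∈ Iic (ε⁻¹ * (b - a)) := fun s => by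
    rw [mem_Iic, mem_Iic, mul_le_mul_iff_right₀ (inv_pos.2 hε), sub_le_sub_iff_right]
  have hind : ∀ s, (Iic b).indicator (fun s => g (ε⁻¹ * (s - a))) s
      = (Iic (ε⁻¹ * (b - a))).indicator g (ε⁻¹ * (s - a)) := fun s => by
    simp only [indicator_apply, hmem s]
  rw [← integral_indicator measurableSet_Iic, ← integral_indicator measurableSet_Iic]
  simp_rw [hind]
  rw [integral_sub_right_eq_self (fun s => (Iic (ε⁻¹ * (b - a))).indicator g (ε⁻¹ * s)) a,
    Measure.integral_comp_inv_mul_left, abs_of_pos hε]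

theorem integral_comp_inv_smul_sub {V : Type*} [NormedAddCommGroup V] [NormedSpace ℝ V]
    [FiniteDimensional ℝ V] [MeasurableSpace V] [BorelSpace V] (μ : Measure V)
    [μ.IsAddHaarMeasure] (f : V → E) {R : ℝ} (hR : 0 ≤ R) (z : V) :
    ∫ x, f (R⁻¹ • (x - z)) ∂μ = R ^ Module.finrank ℝ V • ∫ x, f x ∂μ := by
  rw [integral_sub_right_eq_self (fun x => f (R⁻¹ • x)) z,
    Measure.integral_comp_inv_smul_of_nonneg μ f hR]

theorem integral_prod_mul_volume (f g : ℝ → ℝ) :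
    ∫ p : ℝ × ℝ, f p.1 * g p.2 = (∫ t, f t) * ∫ t, g t := by
  rw [Measure.volume_eq_prod]
  exact integral_prod_mul f g

theorem MeasureTheory.Integrable.prod_mul_volume {f g : ℝ → ℝ} (hf : Integrable f)
    (hg : Integrable g) :
    Integrable fun p : ℝ × ℝ => f p.1 * g p.2 := by
  rw [Measure.volume_eq_prod]
  exact hf.mul_prod hg

theorem integrable_indicator_Icc_one (a b : ℝ) : Integrable ((Icc a b).indicator (1 : ℝ → ℝ)) :=
  (integrable_indicator_iff measurableSet_Icc).2 (integrableOn_const measure_Icc_lt_top.ne)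

theorem integral_indicator_Icc_one {a b : ℝ} (hab : a ≤ b) :
    ∫ t, (Icc a b).indicator (1 : ℝ → ℝ) t = b - a := by
  rw [integral_indicator_one measurableSet_Icc, Real.volume_real_Icc_of_le hab]

theorem integrable_of_le_one_of_eq_zero {f : ℝ → ℝ} {r : ℝ} (hf : Measurable f)
    (hf0 : ∀ s, 0 ≤ f s) (hf1 : ∀ s, f s ≤ 1) (hsupp : ∀ s, r < |s| → f s = 0) :
    Integrable f := by
  refine (integrable_indicator_Icc_one (-r) r).mono' hf.aestronglyMeasurable
    (Eventually.of_forall fun s => ?_)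
  rw [Real.norm_of_nonneg (hf0 s)]
  by_cases hs : s ∈ Icc (-r) r
  · simpa [indicator_of_mem hs] using hf1 s
  · rw [indicator_of_notMem hs, hsupp s (not_le.1 fun h => hs (abs_le.1 h))]

theorem integral_le_two_mul_of_le_one {f : ℝ → ℝ} {r : ℝ} (hr : 0 ≤ r)
    (hf0 : ∀ s, 0 ≤ f s) (hf1 : ∀ s, f s ≤ 1) (hsupp : ∀ s, r < |s| → f s = 0) :
    ∫ s, f s ≤ 2 * r := by
  rw [← setIntegral_eq_integral_of_forall_compl_eq_zero (s := Icc (-r) r)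
    fun s hs => hsupp s (not_le.1 fun h => hs (abs_le.1 h))]
  calc ∫ s in Icc (-r) r, f s ≤ ‖∫ s in Icc (-r) r, f s‖ := Real.le_norm_self _
    _ ≤ 1 * volume.real (Icc (-r) r) := norm_setIntegral_le_of_norm_le_const measure_Icc_lt_top
        fun s _ => by rw [Real.norm_of_nonneg (hf0 s)]; exact hf1 s
    _ = 2 * r := by rw [Real.volume_real_Icc_of_le (by linarith)]; ring

theorem two_mul_le_integral_of_eq_one {f : ℝ → ℝ} {r : ℝ} (hr : 0 ≤ r) (hf : Integrable f)
    (hf0 : ∀ s, 0 ≤ f s) (hf1 : ∀ s, |s| ≤ r → f s = 1) :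
    2 * r ≤ ∫ s, f s :=
  calc 2 * r = 1 * volume.real (Icc (-r) r) := by
        rw [Real.volume_real_Icc_of_le (by linarith)]; ring
    _ ≤ ∫ s in Icc (-r) r, f s := setIntegral_ge_of_const_le_real measurableSet_Icc
        measure_Icc_lt_top.ne (fun s hs => (hf1 s (abs_le.2 hs)).ge) hf.integrableOn
    _ ≤ ∫ s, f s := setIntegral_le_integral hf (Eventually.of_forall hf0)

end Integrals

def sliceMass (u : ℝ × ℝ → ℝ) (t : ℝ) : ℝ := ∫ s, u (t, s)

def stripMass (u : ℝ × ℝ → ℝ) (h t η : ℝ) : ℝ := ∫ σ in Ioc (η - h) (η + h), u (t, σ)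

/-- `𝓔_z^{(1)}` in the coordinates `p = ε⁻¹ (x - z)`, up to the factor `(2Nε)⁻¹ e₁`. -/
def blockError (u : ℝ × ℝ → ℝ) (N : ℕ) (p : ℝ × ℝ) : ℝ :=
  (closedBall (0 : ℝ × ℝ) N).indicator 1 p -
    ∑ k ∈ Finset.Icc (-(N : ℤ)) N, stripMass u N (p.1 - k) p.2

theorem norm_smul_e1 (a : ℝ) : ‖a • e1‖ = |a| := by
  simp [e1, Prod.norm_def]

theorem alpha1_eq (u : ℝ × ℝ → ℝ) {ε : ℝ} (hε : 0 < ε) (c x : ℝ × ℝ) :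
    alpha1 u ε c x = (ε * ∫ σ in Iic (ε⁻¹ * (x.2 - c.2)), u (ε⁻¹ * (x.1 - c.1), σ)) • e1 := by
  rw [alpha1, ← smul_eq_mul,
    ← setIntegral_Iic_comp_inv_mul_sub (fun σ => u (ε⁻¹ * (x.1 - c.1), σ)) hε c.2 x.2]
  rfl

theorem alpha1_sub_alpha1 {u : ℝ × ℝ → ℝ} (hint : ∀ t, Integrable fun s => u (t, s)) {ε : ℝ}
    (hε : 0 < ε) (c x : ℝ × ℝ) {h : ℝ} (hh : 0 ≤ h) :
    alpha1 u ε (c - (h * ε) • e2) x - alpha1 u ε (c + (h * ε) • e2) x =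
      (ε * stripMass u h (ε⁻¹ * (x.1 - c.1)) (ε⁻¹ * (x.2 - c.2))) • e1 := by
  have hlo : ε⁻¹ * (x.2 - (c + (h * ε) • e2).2) = ε⁻¹ * (x.2 - c.2) - h := by
    simp only [e2, Prod.snd_add, Prod.smul_snd, smul_eq_mul, mul_one]
    field_simp
    ring
  have hhi : ε⁻¹ * (x.2 - (c - (h * ε) • e2).2) = ε⁻¹ * (x.2 - c.2) + h := by
    simp only [e2, Prod.snd_sub, Prod.smul_snd, smul_eq_mul, mul_one]
    field_simp
    ring
  rw [alpha1_eq u hε, alpha1_eq u hε, ← sub_smul, ← mul_sub, hlo, hhi]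
  simp only [e2, Prod.fst_add, Prod.fst_sub, Prod.smul_fst, smul_eq_mul, mul_zero, add_zero,
    sub_zero]
  rw [intervalIntegral.integral_Iic_sub_Iic (hint _).integrableOn (hint _).integrableOn,
    intervalIntegral.integral_of_le (by linarith), stripMass]

theorem Ez1_eq {u : ℝ × ℝ → ℝ} (hint : ∀ t, Integrable fun s => u (t, s)) {ε : ℝ} (hε : 0 < ε)
    (δ : ℝ) (z x : ℝ × ℝ) :
    Ez1 u δ ε z x = ((2 * blockN δ * ε)⁻¹ * blockError u (blockN δ) (ε⁻¹ • (x - z))) • e1 := by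
  set N := blockN δ
  set p := ε⁻¹ • (x - z)
  have hQ : (Qz N ε z).indicator (fun _ => (1 : ℝ)) x =
      (closedBall (0 : ℝ × ℝ) N).indicator 1 p := by
    have hmem : x ∈ Qz N ε z ↔ p ∈ closedBall (0 : ℝ × ℝ) N := by
      rw [mem_closedBall_zero_iff, norm_smul, Real.norm_of_nonneg (inv_nonneg.2 hε.le),
        inv_mul_le_iff₀ hε, mul_comm]
      rfl
    by_cases hx : x ∈ Qz N ε z
    · rw [indicator_of_mem hx, indicator_of_mem (hmem.1 hx), Pi.one_apply]
    · rw [indicator_of_notMem hx, indicator_of_notMem (mt hmem.2 hx)]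
  have hterm : ∀ k : ℤ,
      alpha1 u ε (z + ((k : ℝ) * ε) • e1 - ((N : ℝ) * ε) • e2) x -
        alpha1 u ε (z + ((k : ℝ) * ε) • e1 + ((N : ℝ) * ε) • e2) x =
      (ε * stripMass u N (p.1 - k) p.2) • e1 := by
    intro k
    rw [alpha1_sub_alpha1 hint hε _ _ (Nat.cast_nonneg N)]
    congr 4
    · simp only [p, e1, Prod.fst_add, Prod.smul_fst, Prod.fst_sub, smul_eq_mul, mul_one]
      field_simp
      ring
    · simp [e1]
  rw [Ez1, Mz1, hQ, Finset.sum_congr rfl fun k _ => hterm k, ← Finset.sum_smul, smul_smul,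
    ← sub_smul, blockError, ← Finset.mul_sum]
  congr 1
  field_simp
  rfl

theorem integral_norm_Ez1_sq {u : ℝ × ℝ → ℝ} (hint : ∀ t, Integrable fun s => u (t, s))
    {ε : ℝ} (hε : 0 < ε) (δ : ℝ) (z : ℝ × ℝ) :
    ∫ x, ‖Ez1 u δ ε z x‖ ^ 2 = (2 * blockN δ : ℝ)⁻¹ ^ 2 * ∫ p, blockError u (blockN δ) p ^ 2 := by
  simp_rw [Ez1_eq hint hε, norm_smul_e1, sq_abs, mul_pow]
  rw [integral_const_mul,
    integral_comp_inv_smul_sub volume (fun p => blockError u (blockN δ) p ^ 2) hε.le z]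
  simp only [Module.finrank_prod, Module.finrank_self, smul_eq_mul]
  field_simp

structure IsSquareBump (δ : ℝ) (u : ℝ × ℝ → ℝ) : Prop where
  measurable : Measurable u
  nonneg : ∀ x, 0 ≤ u x
  le_one : ∀ x, u x ≤ 1
  eq_zero : ∀ x, 1 / 2 + δ ≤ ‖x‖ → u x = 0

namespace IsSquareBump

variable {δ : ℝ} {u : ℝ × ℝ → ℝ}

theorem eq_zero_of_le_abs_fst (hu : IsSquareBump δ u) {t : ℝ} (ht : 1 / 2 + δ ≤ |t|) (s : ℝ) :
    u (t, s) = 0 :=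
  hu.eq_zero _ (ht.trans (norm_fst_le (t, s)))

theorem eq_zero_of_le_abs_snd (hu : IsSquareBump δ u) (t : ℝ) {s : ℝ} (hs : 1 / 2 + δ ≤ |s|) :
    u (t, s) = 0 :=
  hu.eq_zero _ (hs.trans (norm_snd_le (t, s)))

theorem integrable_slice (hu : IsSquareBump δ u) (t : ℝ) : Integrable fun s => u (t, s) :=
  integrable_of_le_one_of_eq_zero (hu.measurable.comp measurable_prodMk_left)
    (fun _ => hu.nonneg _) (fun _ => hu.le_one _) fun _ hs => hu.eq_zero_of_le_abs_snd t hs.le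

theorem sliceMass_nonneg (hu : IsSquareBump δ u) (t : ℝ) : 0 ≤ sliceMass u t :=
  integral_nonneg fun _ => hu.nonneg _

theorem sliceMass_le (hu : IsSquareBump δ u) (hδ0 : 0 ≤ δ) (t : ℝ) : sliceMass u t ≤ 1 + 2 * δ := by
  have := integral_le_two_mul_of_le_one (by linarith) (fun s => hu.nonneg (t, s))
    (fun s => hu.le_one (t, s)) fun _ hs => hu.eq_zero_of_le_abs_snd t hs.le
  rw [sliceMass]
  linarith

theorem sliceMass_eq_zero (hu : IsSquareBump δ u) {t : ℝ} (ht : 1 / 2 + δ ≤ |t|) :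
    sliceMass u t = 0 := by
  simp [sliceMass, hu.eq_zero_of_le_abs_fst ht]

theorem one_sub_le_sliceMass (hu : IsSquareBump δ u)
    (hu1 : ∀ x : ℝ × ℝ, ‖x‖ ≤ 1 / 2 - δ → u x = 1) {t : ℝ} (ht : |t| ≤ 1 / 2 - δ) :
    1 - 2 * δ ≤ sliceMass u t := by
  have := two_mul_le_integral_of_eq_one ((abs_nonneg t).trans ht) (hu.integrable_slice t)
    (fun s => hu.nonneg (t, s)) fun s hs => hu1 _ (max_le ht hs)
  rw [sliceMass]
  linarith

theorem stripMass_nonneg (hu : IsSquareBump δ u) (h t η : ℝ) : 0 ≤ stripMass u h t η :=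
  setIntegral_nonneg measurableSet_Ioc fun _ _ => hu.nonneg _

theorem stripMass_le_sliceMass (hu : IsSquareBump δ u) (h t η : ℝ) :
    stripMass u h t η ≤ sliceMass u t :=
  setIntegral_le_integral (hu.integrable_slice t) (Eventually.of_forall fun _ => hu.nonneg _)

theorem stripMass_eq_zero_of_le_abs_fst (hu : IsSquareBump δ u) {t : ℝ} (ht : 1 / 2 + δ ≤ |t|)
    (h η : ℝ) : stripMass u h t η = 0 :=
  setIntegral_eq_zero_of_forall_eq_zero fun s _ => hu.eq_zero_of_le_abs_fst ht s

theorem stripMass_eq_zero_of_le_abs_snd (hu : IsSquareBump δ u) (hδ : δ ≤ 1 / 2) {h η : ℝ}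
    (hη : h + 1 ≤ |η|) (t : ℝ) : stripMass u h t η = 0 := by
  refine setIntegral_eq_zero_of_forall_eq_zero fun s hs => hu.eq_zero_of_le_abs_snd t ?_
  have hsη : |s - η| ≤ h := abs_le.2 ⟨by linarith [hs.1], by linarith [hs.2]⟩
  have := abs_sub_abs_le_abs_sub η s
  rw [abs_sub_comm] at this
  linarith

theorem stripMass_eq_sliceMass (hu : IsSquareBump δ u) (hδ : δ ≤ 1 / 2) {h η : ℝ}
    (hη : |η| + 1 ≤ h) (t : ℝ) : stripMass u h t η = sliceMass u t := by
  refine setIntegral_eq_integral_of_forall_compl_eq_zero fun s hs => hu.eq_zero_of_le_abs_snd t ?_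
  rw [mem_Ioc, not_and_or, not_lt, not_le] at hs
  rcases hs with hs | hs
  · linarith [le_abs_self η, neg_le_abs s]
  · linarith [neg_abs_le η, le_abs_self s]

theorem sum_stripMass_le (hu : IsSquareBump δ u) (hδ0 : 0 ≤ δ) (hδ : δ ≤ 1 / 2) (N : ℕ)
    (τ η : ℝ) : ∑ k ∈ Finset.Icc (-(N : ℤ)) N, stripMass u N (τ - k) η ≤ 2 * (1 + 2 * δ) := by
  set a := ⌊τ⌋
  -- only the two columns through `⌊τ⌋` and `⌊τ⌋ + 1` meet the support of `u(τ - k, ·)`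
  have hvanish : ∀ k : ℤ, sliceMass u (τ - k) ≠ 0 → k ∈ ({a, a + 1} : Finset ℤ) := by
    intro k hk
    by_contra hka
    simp only [Finset.mem_insert, Finset.mem_singleton, not_or] at hka
    refine hk (hu.sliceMass_eq_zero ?_)
    have h1 := Int.floor_le τ
    have h2 := Int.lt_floor_add_one τ
    rcases lt_or_gt_of_ne hka.1 with hlt | hgt
    · have : (k : ℝ) + 1 ≤ a := by exact_mod_cast hlt
      rw [abs_of_nonneg (by linarith)]
      linarith
    · have : (a : ℝ) + 2 ≤ k := by exact_mod_cast (show a + 2 ≤ k by omega)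
      rw [abs_of_neg (by linarith)]
      linarith
  calc ∑ k ∈ Finset.Icc (-(N : ℤ)) N, stripMass u N (τ - k) η
      ≤ ∑ k ∈ Finset.Icc (-(N : ℤ)) N, sliceMass u (τ - k) :=
        Finset.sum_le_sum fun _ _ => hu.stripMass_le_sliceMass _ _ _
    _ = ∑ k ∈ Finset.Icc (-(N : ℤ)) N with k ∈ ({a, a + 1} : Finset ℤ), sliceMass u (τ - k) :=
        (Finset.sum_filter_of_ne fun k _ => hvanish k).symm
    _ ≤ ∑ k ∈ ({a, a + 1} : Finset ℤ), sliceMass u (τ - k) :=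
        Finset.sum_le_sum_of_subset_of_nonneg (fun k hk => (Finset.mem_filter.1 hk).2)
          fun _ _ _ => hu.sliceMass_nonneg _
    _ ≤ 2 * (1 + 2 * δ) := by
        rw [Finset.sum_pair (by simp)]
        linarith [hu.sliceMass_le hδ0 (τ - a), hu.sliceMass_le hδ0 (τ - ↑(a + 1))]

theorem blockError_sq_le (hu : IsSquareBump δ u) (hδ0 : 0 ≤ δ) (hδ : δ ≤ 1 / 4) (N : ℕ)
    (p : ℝ × ℝ) : blockError u N p ^ 2 ≤ 9 := by
  have h0 : 0 ≤ (closedBall (0 : ℝ × ℝ) N).indicator (1 : ℝ × ℝ → ℝ) p :=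
    indicator_nonneg (fun _ _ => zero_le_one) p
  have h1 : (closedBall (0 : ℝ × ℝ) N).indicator (1 : ℝ × ℝ → ℝ) p ≤ 1 :=
    indicator_apply_le' (fun _ => le_rfl) fun _ => zero_le_one
  have hS0 : 0 ≤ ∑ k ∈ Finset.Icc (-(N : ℤ)) N, stripMass u N (p.1 - k) p.2 :=
    Finset.sum_nonneg fun _ _ => hu.stripMass_nonneg _ _ _
  have hS := hu.sum_stripMass_le hδ0 (by linarith) N p.1 p.2
  rw [blockError, show (9 : ℝ) = 3 ^ 2 by norm_num]
  exact sq_le_sq' (by linarith) (by linarith)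

theorem blockError_eq_zero (hu : IsSquareBump δ u) (hδ : δ ≤ 1 / 2) {N : ℕ} {p : ℝ × ℝ}
    (hp : N + 1 ≤ ‖p‖) : blockError u N p = 0 := by
  have hball : p ∉ closedBall (0 : ℝ × ℝ) N := by
    rw [mem_closedBall_zero_iff]
    linarith
  rw [blockError, indicator_of_notMem hball, zero_sub, neg_eq_zero]
  refine Finset.sum_eq_zero fun k hk => ?_
  rw [Prod.norm_def, Real.norm_eq_abs, Real.norm_eq_abs] at hp
  rcases le_max_iff.1 hp with hp1 | hp2
  · apply hu.stripMass_eq_zero_of_le_abs_fst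
    rw [Finset.mem_Icc] at hk
    have hk' : |(k : ℝ)| ≤ N := abs_le.2 ⟨by exact_mod_cast hk.1, by exact_mod_cast hk.2⟩
    linarith [abs_sub_abs_le_abs_sub p.1 k]
  · exact hu.stripMass_eq_zero_of_le_abs_snd hδ hp2 _

theorem abs_blockError_le (hu : IsSquareBump δ u) (hδ0 : 0 ≤ δ)
    (hu1 : ∀ x : ℝ × ℝ, ‖x‖ ≤ 1 / 2 - δ → u x = 1) {N : ℕ} {m : ℤ} {p : ℝ × ℝ}
    (hm : |(m : ℝ)| + 1 ≤ N) (hp1 : |p.1 - m| ≤ 1 / 2 - δ) (hp2 : |p.2| + 1 ≤ N) :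
    |blockError u N p| ≤ 2 * δ := by
  have hδ : δ ≤ 1 / 2 := by linarith [abs_nonneg (p.1 - m)]
  have hmN : m ∈ Finset.Icc (-(N : ℤ)) N := by
    have := abs_le.1 (show |(m : ℝ)| ≤ N by linarith)
    exact Finset.mem_Icc.2 ⟨by exact_mod_cast this.1, by exact_mod_cast this.2⟩
  have hsum : ∑ k ∈ Finset.Icc (-(N : ℤ)) N, stripMass u N (p.1 - k) p.2
      = sliceMass u (p.1 - m) := by
    rw [Finset.sum_eq_single_of_mem m hmN fun k _ hkm => ?_, hu.stripMass_eq_sliceMass hδ hp2]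
    apply hu.stripMass_eq_zero_of_le_abs_fst
    have hkm' : (1 : ℝ) ≤ |(k : ℝ) - m| := by exact_mod_cast Int.one_le_abs (sub_ne_zero.2 hkm)
    have := abs_sub_abs_le_abs_sub ((k : ℝ) - m) (p.1 - m)
    rw [show (k : ℝ) - m - (p.1 - m) = -(p.1 - k) by ring, abs_neg] at this
    linarith
  have hball : p ∈ closedBall (0 : ℝ × ℝ) N := by
    rw [mem_closedBall_zero_iff, Prod.norm_def, Real.norm_eq_abs, Real.norm_eq_abs]
    have := abs_sub_abs_le_abs_sub p.1 m
    exact max_le (by linarith) (by linarith)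
  rw [blockError, hsum, indicator_of_mem hball, Pi.one_apply, abs_le]
  have := hu.one_sub_le_sliceMass hu1 hp1
  have := hu.sliceMass_le hδ0 (p.1 - m)
  constructor <;> linarith

end IsSquareBump

def boxIndicator (N : ℕ) (t : ℝ) : ℝ := (Icc (-(N + 1 : ℝ)) (N + 1)).indicator 1 t

def edgeStrips (a b t : ℝ) : ℝ := (Icc a b).indicator 1 t + (Icc (-b) (-a)).indicator 1 t

def halfIntegerStrips (δ : ℝ) (N : ℕ) (t : ℝ) : ℝ :=
  ∑ j ∈ Finset.Icc (-(N : ℤ)) N, (Icc (j + 1 / 2 - δ) (j + 1 / 2 + δ)).indicator 1 t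

def badColumns (δ : ℝ) (N : ℕ) (t : ℝ) : ℝ :=
  edgeStrips (N - 2) (N + 1) t + halfIntegerStrips δ N t

def errorMajorant (δ : ℝ) (N : ℕ) (p : ℝ × ℝ) : ℝ :=
  4 * δ ^ 2 * (boxIndicator N p.1 * boxIndicator N p.2) +
    9 * (badColumns δ N p.1 * boxIndicator N p.2) +
    9 * (boxIndicator N p.1 * edgeStrips (N - 1) (N + 1) p.2)

theorem boxIndicator_nonneg (N : ℕ) (t : ℝ) : 0 ≤ boxIndicator N t :=
  indicator_nonneg (fun _ _ => zero_le_one) t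

theorem edgeStrips_nonneg (a b t : ℝ) : 0 ≤ edgeStrips a b t :=
  add_nonneg (indicator_nonneg (fun _ _ => zero_le_one) t)
    (indicator_nonneg (fun _ _ => zero_le_one) t)

theorem halfIntegerStrips_nonneg (δ : ℝ) (N : ℕ) (t : ℝ) : 0 ≤ halfIntegerStrips δ N t :=
  Finset.sum_nonneg fun _ _ => indicator_nonneg (fun _ _ => zero_le_one) t

theorem badColumns_nonneg (δ : ℝ) (N : ℕ) (t : ℝ) : 0 ≤ badColumns δ N t :=
  add_nonneg (edgeStrips_nonneg _ _ t) (halfIntegerStrips_nonneg δ N t)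

theorem errorMajorant_nonneg (δ : ℝ) (N : ℕ) (p : ℝ × ℝ) : 0 ≤ errorMajorant δ N p := by
  have := boxIndicator_nonneg N p.1
  have := boxIndicator_nonneg N p.2
  have := badColumns_nonneg δ N p.1
  have := edgeStrips_nonneg (N - 1) (N + 1) p.2
  rw [errorMajorant]
  positivity

theorem one_le_edgeStrips {a b t : ℝ} (ha : a ≤ |t|) (hb : |t| ≤ b) : 1 ≤ edgeStrips a b t := by
  have h1 := indicator_nonneg (fun _ _ => zero_le_one) t (s := Icc a b) (f := (1 : ℝ → ℝ))
  have h2 := indicator_nonneg (fun _ _ => zero_le_one) t (s := Icc (-b) (-a)) (f := (1 : ℝ → ℝ))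
  rw [edgeStrips]
  rcases abs_cases t with ⟨ht, -⟩ | ⟨ht, -⟩
  · rw [ht] at ha hb
    rw [indicator_of_mem (show t ∈ Icc a b from ⟨ha, hb⟩), Pi.one_apply]
    linarith
  · rw [ht] at ha hb
    rw [indicator_of_mem (show t ∈ Icc (-b) (-a) from ⟨by linarith, by linarith⟩), Pi.one_apply]
    linarith

theorem one_le_halfIntegerStrips {δ : ℝ} {N : ℕ} {j : ℤ} (hj : j ∈ Finset.Icc (-(N : ℤ)) N) {t : ℝ}
    (ht : |t - (j + 1 / 2)| ≤ δ) : 1 ≤ halfIntegerStrips δ N t := by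
  have hmem := abs_le.1 ht
  calc (1 : ℝ) = (Icc (j + 1 / 2 - δ) (j + 1 / 2 + δ)).indicator 1 t := by
        rw [indicator_of_mem (show t ∈ Icc ((j : ℝ) + 1 / 2 - δ) (j + 1 / 2 + δ) from
          ⟨by linarith, by linarith⟩), Pi.one_apply]
    _ ≤ halfIntegerStrips δ N t :=
        Finset.single_le_sum (f := fun j : ℤ => (Icc (j + 1 / 2 - δ) (j + 1 / 2 + δ)).indicator
          (1 : ℝ → ℝ) t) (fun _ _ => indicator_nonneg (fun _ _ => zero_le_one) t) hj

theorem exists_near_int_or_one_le_badColumns {δ : ℝ} {N : ℕ} {τ : ℝ} (hτ : |τ| ≤ N + 1) :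
    (∃ m : ℤ, |(m : ℝ)| + 1 ≤ N ∧ |τ - m| ≤ 1 / 2 - δ) ∨ 1 ≤ badColumns δ N τ := by
  have hedge := edgeStrips_nonneg (N - 2) (N + 1) τ
  have hhalf := halfIntegerStrips_nonneg δ N τ
  by_cases hτN : N - 2 ≤ |τ|
  · exact Or.inr (by rw [badColumns]; linarith [one_le_edgeStrips hτN hτ])
  set m := round τ
  have hround := abs_le.1 (abs_sub_round τ)
  have hτ' := abs_le.1 (not_le.1 hτN).le
  have hm : |(m : ℝ)| + 1 ≤ N := by
    have : |(m : ℝ)| ≤ N - 1 := abs_le.2 ⟨by linarith, by linarith⟩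
    linarith
  by_cases hnear : |τ - m| ≤ 1 / 2 - δ
  · exact Or.inl ⟨m, hm, hnear⟩
  -- otherwise `τ` lies within `δ` of `m + 1/2` or of `m - 1/2`
  have hmN := abs_le.1 (show |(m : ℝ)| ≤ N - 1 by linarith)
  refine Or.inr (le_add_of_nonneg_of_le hedge ?_ : _ ≤ badColumns δ N τ)
  rcases le_or_gt (m : ℝ) τ with hmτ | hτm
  · rw [abs_of_nonneg (by linarith)] at hnear
    refine one_le_halfIntegerStrips (j := m) (Finset.mem_Icc.2 ⟨?_, ?_⟩)
      (abs_le.2 ⟨by linarith, by linarith⟩)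
    · exact_mod_cast (show -(N : ℝ) ≤ m by linarith)
    · exact_mod_cast (show (m : ℝ) ≤ N by linarith)
  · rw [abs_of_neg (by linarith)] at hnear
    refine one_le_halfIntegerStrips (j := m - 1) (Finset.mem_Icc.2 ⟨?_, ?_⟩)
      (abs_le.2 ⟨by push_cast; linarith, by push_cast; linarith⟩)
    · exact_mod_cast (show -(N : ℝ) ≤ m - 1 by linarith)
    · exact_mod_cast (show (m : ℝ) - 1 ≤ N by linarith)

theorem integrable_edgeStrips (a b : ℝ) : Integrable (edgeStrips a b) :=
  (integrable_indicator_Icc_one a b).add (integrable_indicator_Icc_one (-b) (-a))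

theorem integral_edgeStrips {a b : ℝ} (hab : a ≤ b) : ∫ t, edgeStrips a b t = 2 * (b - a) := by
  unfold edgeStrips
  rw [integral_add (integrable_indicator_Icc_one a b)
    (integrable_indicator_Icc_one (-b) (-a)), integral_indicator_Icc_one hab,
    integral_indicator_Icc_one (neg_le_neg hab)]
  ring

theorem integrable_halfIntegerStrips (δ : ℝ) (N : ℕ) : Integrable (halfIntegerStrips δ N) := by
  unfold halfIntegerStrips
  exact integrable_finsetSum _ fun _ _ => integrable_indicator_Icc_one _ _

theorem integral_halfIntegerStrips {δ : ℝ} (hδ0 : 0 ≤ δ) (N : ℕ) :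
    ∫ t, halfIntegerStrips δ N t = (2 * N + 1) * (2 * δ) := by
  unfold halfIntegerStrips
  rw [integral_finsetSum _ fun _ _ => integrable_indicator_Icc_one _ _]
  rw [Finset.sum_congr rfl fun (j : ℤ) _ => (integral_indicator_Icc_one (by linarith)).trans
    (by ring : (j : ℝ) + 1 / 2 + δ - (j + 1 / 2 - δ) = 2 * δ), Finset.sum_const, Int.card_Icc,
    nsmul_eq_mul]
  rw [show ((N : ℤ) + 1 - -(N : ℤ)).toNat = 2 * N + 1 by omega]
  push_cast
  ring

theorem integrable_badColumns (δ : ℝ) (N : ℕ) : Integrable (badColumns δ N) :=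
  (integrable_edgeStrips _ _).add (integrable_halfIntegerStrips δ N)

theorem integral_badColumns {δ : ℝ} (hδ0 : 0 ≤ δ) (N : ℕ) :
    ∫ t, badColumns δ N t = 6 + (2 * N + 1) * (2 * δ) := by
  unfold badColumns
  rw [integral_add (integrable_edgeStrips _ _) (integrable_halfIntegerStrips δ N),
    integral_edgeStrips (by linarith), integral_halfIntegerStrips hδ0]
  ring

theorem integrable_boxIndicator (N : ℕ) : Integrable (boxIndicator N) :=
  integrable_indicator_Icc_one _ _

theorem integral_boxIndicator (N : ℕ) : ∫ t, boxIndicator N t = 2 * N + 2 := by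
  unfold boxIndicator
  rw [integral_indicator_Icc_one (by linarith)]
  ring

theorem integrable_errorMajorant (δ : ℝ) (N : ℕ) : Integrable (errorMajorant δ N) :=
  ((((integrable_boxIndicator N).prod_mul_volume (integrable_boxIndicator N)).const_mul _).add
    (((integrable_badColumns δ N).prod_mul_volume
      (integrable_boxIndicator N)).const_mul _)).add
    (((integrable_boxIndicator N).prod_mul_volume (integrable_edgeStrips _ _)).const_mul _)

theorem integral_errorMajorant {δ : ℝ} (hδ0 : 0 ≤ δ) (N : ℕ) :
    ∫ p, errorMajorant δ N p =
      4 * δ ^ 2 * (2 * N + 2) ^ 2 + 9 * ((6 + (2 * N + 1) * (2 * δ)) * (2 * N + 2)) +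
        9 * ((2 * N + 2) * 4) := by
  have hbox := integrable_boxIndicator N
  have i1 : Integrable fun p : ℝ × ℝ => 4 * δ ^ 2 * (boxIndicator N p.1 * boxIndicator N p.2) :=
    (hbox.prod_mul_volume hbox).const_mul _
  have i2 : Integrable fun p : ℝ × ℝ => 9 * (badColumns δ N p.1 * boxIndicator N p.2) :=
    ((integrable_badColumns δ N).prod_mul_volume hbox).const_mul _
  have i3 : Integrable fun p : ℝ × ℝ =>
      9 * (boxIndicator N p.1 * edgeStrips (N - 1) (N + 1) p.2) :=
    (hbox.prod_mul_volume (integrable_edgeStrips _ _)).const_mul _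
  have hsplit := integral_add (i1.add i2) i3
  simp only [Pi.add_apply] at hsplit
  unfold errorMajorant
  rw [hsplit, integral_add i1 i2, integral_const_mul, integral_const_mul, integral_const_mul,
    integral_prod_mul_volume, integral_prod_mul_volume, integral_prod_mul_volume,
    integral_boxIndicator, integral_badColumns hδ0, integral_edgeStrips (by linarith)]
  ring

theorem IsSquareBump.blockError_sq_le_errorMajorant {δ : ℝ} {u : ℝ × ℝ → ℝ}
    (hu : IsSquareBump δ u) (hδ0 : 0 ≤ δ) (hδ : δ ≤ 1 / 4)
    (hu1 : ∀ x : ℝ × ℝ, ‖x‖ ≤ 1 / 2 - δ → u x = 1) (N : ℕ) (p : ℝ × ℝ) :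
    blockError u N p ^ 2 ≤ errorMajorant δ N p := by
  obtain ⟨τ, η⟩ := p
  by_cases hin : |τ| ≤ N + 1 ∧ |η| ≤ N + 1
  swap
  · have hp : (N : ℝ) + 1 ≤ ‖(τ, η)‖ := by
      rw [Prod.norm_def, Real.norm_eq_abs, Real.norm_eq_abs]
      rw [not_and_or, not_le, not_le] at hin
      rcases hin with h | h
      · exact le_max_of_le_left h.le
      · exact le_max_of_le_right h.le
    rw [hu.blockError_eq_zero (by linarith) hp, sq, zero_mul]
    exact errorMajorant_nonneg δ N _
  have hbox : ∀ t : ℝ, |t| ≤ N + 1 → boxIndicator N t = 1 := fun t ht => by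
    rw [boxIndicator, indicator_of_mem (show t ∈ Icc _ _ from abs_le.1 ht), Pi.one_apply]
  have hG := hu.blockError_sq_le hδ0 hδ N (τ, η)
  have hrow := edgeStrips_nonneg (N - 1) (N + 1) η
  have hcol := badColumns_nonneg δ N τ
  simp only [errorMajorant, hbox τ hin.1, hbox η hin.2, mul_one, one_mul]
  by_cases hηN : |η| + 1 ≤ N
  · rcases exists_near_int_or_one_le_badColumns hin.1 with ⟨m, hm, hτm⟩ | hbad
    · have hsmall := pow_le_pow_left₀ (abs_nonneg _)
        (hu.abs_blockError_le (p := (τ, η)) hδ0 hu1 hm hτm hηN) 2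
      rw [sq_abs] at hsmall
      nlinarith
    · nlinarith
  · have := one_le_edgeStrips (a := N - 1) (by linarith) hin.2
    nlinarith

theorem IsSquareBump.integral_blockError_sq_le {δ : ℝ} {u : ℝ × ℝ → ℝ}
    (hu : IsSquareBump δ u) (hδ0 : 0 ≤ δ) (hδ : δ ≤ 1 / 4)
    (hu1 : ∀ x : ℝ × ℝ, ‖x‖ ≤ 1 / 2 - δ → u x = 1) (N : ℕ) :
    ∫ p, blockError u N p ^ 2 ≤ ∫ p, errorMajorant δ N p :=
  integral_mono_of_nonneg (Eventually.of_forall fun _ => sq_nonneg _)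
    (integrable_errorMajorant δ N) (Eventually.of_forall
      (hu.blockError_sq_le_errorMajorant hδ0 hδ hu1 N))

theorem one_le_blockN_mul_sq {δ : ℝ} (hδ : 0 < δ) : 1 ≤ (blockN δ : ℝ) * δ ^ 2 :=
  calc (1 : ℝ) = (δ ^ 2)⁻¹ * δ ^ 2 := (inv_mul_cancel₀ (by positivity)).symm
    _ ≤ blockN δ * δ ^ 2 := by
      gcongr
      rw [blockN]
      push_cast
      exact (Nat.lt_floor_add_one _).le

theorem inv_sq_mul_integral_errorMajorant_le {δ : ℝ} {N : ℕ} (hδ0 : 0 < δ) (hδ : δ ≤ 1 / 4)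
    (hN : 1 ≤ N * δ ^ 2) : (2 * N : ℝ)⁻¹ ^ 2 * ∫ p, errorMajorant δ N p ≤ 100 * δ := by
  have hN1 : (1 : ℝ) ≤ N := by nlinarith
  rw [integral_errorMajorant hδ0.le, inv_pow, ← div_eq_inv_mul, div_le_iff₀ (by positivity)]
  nlinarith [mul_le_mul_of_nonneg_left hN (by positivity : (0 : ℝ) ≤ 90 * δ * N),
    mul_le_mul_of_nonneg_left hδ (by positivity : (0 : ℝ) ≤ 64 * δ * N ^ 2),
    mul_le_mul_of_nonneg_left hN1 (by positivity : (0 : ℝ) ≤ δ * N)]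

theorem add_one_le_norm_of_notMem_Qz' {N : ℕ} {δ ε : ℝ} (hδ0 : 0 < δ) (hδ : δ ≤ 1) (hε : 0 < ε)
    {z x : ℝ × ℝ} (hx : x ∉ Qz' N δ ε z) : (N : ℝ) + 1 ≤ ‖ε⁻¹ • (x - z)‖ := by
  have hx' : (N + δ⁻¹) * ε < ‖x - z‖ := not_le.1 hx
  have : 1 ≤ δ⁻¹ := (one_le_inv₀ hδ0).2 hδ
  rw [norm_smul, Real.norm_of_nonneg (inv_nonneg.2 hε.le), le_inv_mul_iff₀ hε]
  nlinarith

/-- Support and `L²` bound on the block-averaging errors for the plateau profile: if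
`0 < δ ≤ 1/3200`, `ε > 0`, and `u ∈ C¹(ℝ², [0,1])` equals `0` for `|x|_∞ ≥ 1/2 + δ` and `1`
for `|x|_∞ ≤ 1/2 - δ`, then `𝓔_z^{(1)}` vanishes outside `Q_z'` and `∫ |𝓔_z^{(1)}|² ≤ 100 δ`. -/
theorem stmt4 (δ ε : ℝ) (hδ0 : 0 < δ) (hδ : δ ≤ 1 / 3200) (hε : 0 < ε)
    (u : ℝ × ℝ → ℝ) (hu : ContDiff ℝ 1 u) (hu01 : ∀ x, u x ∈ Set.Icc (0 : ℝ) 1)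
    (hu0 : ∀ x : ℝ × ℝ, 1 / 2 + δ ≤ ‖x‖ → u x = 0)
    (hu1 : ∀ x : ℝ × ℝ, ‖x‖ ≤ 1 / 2 - δ → u x = 1)
    (z : ℝ × ℝ) :
    (∀ x : ℝ × ℝ, x ∉ Qz' (blockN δ) δ ε z → Ez1 u δ ε z x = 0) ∧
    (∫ x : ℝ × ℝ, ‖Ez1 u δ ε z x‖ ^ 2) ≤ 100 * δ := by
  have hbump : IsSquareBump δ u :=
    ⟨hu.continuous.measurable, fun x => (hu01 x).1, fun x => (hu01 x).2, hu0⟩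
  have hδ4 : δ ≤ 1 / 4 := by linarith
  refine ⟨fun x hx => ?_, ?_⟩
  · rw [Ez1_eq hbump.integrable_slice hε, hbump.blockError_eq_zero (by linarith)
      (add_one_le_norm_of_notMem_Qz' hδ0 (by linarith) hε hx), mul_zero, zero_smul]
  · calc ∫ x, ‖Ez1 u δ ε z x‖ ^ 2
        = (2 * blockN δ : ℝ)⁻¹ ^ 2 * ∫ p, blockError u (blockN δ) p ^ 2 :=
          integral_norm_Ez1_sq hbump.integrable_slice hε δ z
      _ ≤ (2 * blockN δ : ℝ)⁻¹ ^ 2 * ∫ p, errorMajorant δ (blockN δ) p :=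
          mul_le_mul_of_nonneg_left (hbump.integral_blockError_sq_le hδ0.le hδ4 hu1 _)
            (by positivity)
      _ ≤ 100 * δ := inv_sq_mul_integral_errorMajorant_le hδ0 hδ4 (one_le_blockN_mul_sq hδ0)
end
end
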